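/- arXiv:2312.03260 — 5 statements merged into one kernel-verified Lean document; each statement's English description precedes it below -/
import Mathlib

section
/- Let G be a graph of order n such that G is not isomorphic to K₃ ∪ (n−3)K₁ when n ≥ 3, and G is not isomorphic to K₃ ∪ K₂ ∪ (n−5)K₁ when n ≥ 5. Then the maximum number of pairwise edge-disjoint edge-pairs in G equals ⌊|E(G)|/2⌋ if |E(G)| ≥ 2Δ(G), and equals |E(G)| − Δ(G) if |E(G)| < 2Δ(G). -/
open SimpleGraph

/-- A finset `s` of edges is an edge-pair of `G` if it consists of two distinct edges of
`G` sharing no common endpoint (i.e. two independent edges). -/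
def IsEdgePair {V : Type*} [DecidableEq V] (G : SimpleGraph V) (s : Finset (Sym2 V)) :
    Prop :=
  ∃ e f : Sym2 V, e ∈ G.edgeSet ∧ f ∈ G.edgeSet ∧ e ≠ f ∧
    (∀ v : V, ¬(v ∈ e ∧ v ∈ f)) ∧ s = {e, f}

/-!
Every edge-pair uses two edges, and for a vertex `v` of maximum degree at least one of them
avoids `v`; this gives the upper bound `min ⌊m/2⌋ (m - Δ)`.

For the lower bound when `m ≤ 2Δ`, match each of the `m - Δ` edges avoiding `v` to a distinct
edge at `v` independent of it, by Hall's theorem. Hall's condition can only fail when `Δ = 2`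
and `v` lies on a triangle, and then `G` is one of the two excluded graphs.
When `m > 2Δ`, delete two independent edges and induct: the bound drops by exactly one. If the
smaller graph is excluded, then `G` has maximum degree two and at most six edges, and the
edges off its triangle can be paired with the triangle's edges.
-/

open Finset

def Sym2.Independent {V : Type*} (e f : Sym2 V) : Prop := ∀ v : V, ¬(v ∈ e ∧ v ∈ f)

instance {V : Type*} [Fintype V] [DecidableEq V] : DecidableRel (Sym2.Independent (V := V)) :=
  fun _ _ => by unfold Sym2.Independent; infer_instance

namespace Sym2

variable {V : Type*} {e f : Sym2 V}

theorem Independent.ne (h : Independent e f) : e ≠ f := by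
  rintro rfl
  induction e using Sym2.ind with
  | _ x y => exact h x ⟨mem_mk_left x y, mem_mk_left x y⟩

theorem independent_mk_right {x y : V} (hx : x ∉ e) (hy : y ∉ e) : Independent e s(x, y) := by
  rintro v ⟨hve, hv⟩
  rcases Sym2.mem_iff.1 hv with rfl | rfl
  exacts [hx hve, hy hve]

end Sym2

namespace SimpleGraph

variable {V : Type*} {G H : SimpleGraph V}

-- `G` is `K₃ ∪ (n-3)K₁` or `K₃ ∪ K₂ ∪ (n-5)K₁`
variable (G) in
def IsExceptional : Prop :=
  (∃ a b c : V, a ≠ b ∧ a ≠ c ∧ b ≠ c ∧ G.edgeSet = {s(a, b), s(a, c), s(b, c)}) ∨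
    ∃ a b c d e : V, a ≠ b ∧ a ≠ c ∧ b ≠ c ∧ d ≠ e ∧
      d ∉ ({a, b, c} : Set V) ∧ e ∉ ({a, b, c} : Set V) ∧
      G.edgeSet = {s(a, b), s(a, c), s(b, c), s(d, e)}

theorem IsExceptional.exists_triangle (h : G.IsExceptional) :
    ∃ a b c, G.Adj a b ∧ G.Adj a c ∧ G.Adj b c := by
  rcases h with ⟨a, b, c, -, -, -, hE⟩ | ⟨a, b, c, d, e, -, -, -, -, -, -, hE⟩ <;>
    exact ⟨a, b, c, by simp [← mem_edgeSet, hE]⟩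

variable [DecidableEq V]

theorem IsEdgePair.card_eq_two {s : Finset (Sym2 V)} (h : IsEdgePair G s) : #s = 2 := by
  obtain ⟨e, f, -, -, hef, -, rfl⟩ := h
  exact card_pair hef

theorem IsEdgePair.subset_edgeSet {s : Finset (Sym2 V)} (h : IsEdgePair G s) :
    (s : Set (Sym2 V)) ⊆ G.edgeSet := by
  obtain ⟨e, f, he, hf, -, -, rfl⟩ := h
  simp [Set.insert_subset_iff, he, hf]

theorem IsEdgePair.mono {s : Finset (Sym2 V)} (h : IsEdgePair G s) (hGH : G ≤ H) :
    IsEdgePair H s := by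
  obtain ⟨e, f, he, hf, hef, hind, rfl⟩ := h
  exact ⟨e, f, edgeSet_mono hGH he, edgeSet_mono hGH hf, hef, hind, rfl⟩

variable (G) in
def IsPairPacking (P : Finset (Finset (Sym2 V))) : Prop :=
  (∀ s ∈ P, IsEdgePair G s) ∧ (P : Set (Finset (Sym2 V))).PairwiseDisjoint id

variable {P Q : Finset (Finset (Sym2 V))}

theorem isPairPacking_empty : G.IsPairPacking ∅ := by simp [IsPairPacking]

theorem IsPairPacking.subset (hP : G.IsPairPacking P) (hQ : Q ⊆ P) : G.IsPairPacking Q :=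
  ⟨fun s hs => hP.1 s (hQ hs), hP.2.subset (by simpa using hQ)⟩

theorem IsPairPacking.insert {e f : Sym2 V} (he : e ∈ G.edgeSet) (hf : f ∈ G.edgeSet)
    (hef : e.Independent f) (hP : (G.deleteEdges {e, f}).IsPairPacking P) :
    G.IsPairPacking (insert {e, f} P) ∧ #(insert {e, f} P) = #P + 1 := by
  have hdisj : ∀ s ∈ P, Disjoint ({e, f} : Finset (Sym2 V)) s := by
    intro s hs
    have hsub := (hP.1 s hs).subset_edgeSet
    rw [edgeSet_deleteEdges] at hsub
    rw [← disjoint_coe, coe_pair]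
    exact Set.disjoint_left.2 fun x hx hxs => (hsub hxs).2 hx
  refine ⟨⟨?_, ?_⟩, card_insert_of_notMem fun hP' => ?_⟩
  · simp only [mem_insert, forall_eq_or_imp]
    exact ⟨⟨e, f, he, hf, hef.ne, hef, rfl⟩,
      fun s hs => (hP.1 s hs).mono (deleteEdges_le _)⟩
  · rw [coe_insert]
    exact hP.2.insert fun s hs _ => hdisj s hs
  · exact Finset.disjoint_left.1 (hdisj _ hP') (mem_insert_self e _) (mem_insert_self e _)

variable {a b c : V}

theorem card_triangle (hab : a ≠ b) (hac : a ≠ c) (hbc : b ≠ c) :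
    #{s(a, b), s(a, c), s(b, c)} = 3 := by
  rw [card_insert_of_notMem (by simp [hab, hac, hbc]), card_pair (by simp [hab, hac])]

variable [Fintype V] [DecidableRel G.Adj]

theorem mem_incidenceFinset_iff {v : V} {e : Sym2 V} :
    e ∈ G.incidenceFinset v ↔ e ∈ G.edgeSet ∧ v ∈ e := by
  simp [incidenceSet]

theorem IsPairPacking.two_mul_card_le (hP : G.IsPairPacking P) : 2 * #P ≤ #G.edgeFinset := by
  calc 2 * #P = #(P.biUnion id) := by
        rw [card_biUnion hP.2, mul_comm, ← smul_eq_mul, ← sum_const]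
        exact sum_congr rfl fun s hs => (hP.1 s hs).card_eq_two.symm
    _ ≤ #G.edgeFinset := card_le_card <| biUnion_subset.2 fun s hs => by
        simpa [← coe_subset] using (hP.1 s hs).subset_edgeSet

theorem IsPairPacking.card_le_card_edgeFinset_sub_degree (hP : G.IsPairPacking P) (v : V) :
    #P ≤ #G.edgeFinset - G.degree v := by
  have hcover : ∀ s ∈ P, (s \ G.incidenceFinset v).Nonempty := by
    intro s hs
    obtain ⟨e, f, he, hf, -, hind, rfl⟩ := hP.1 s hs
    by_cases hve : v ∈ e
    · refine ⟨f, mem_sdiff.2 ⟨by simp, fun h => ?_⟩⟩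
      exact hind v ⟨hve, (mem_incidenceFinset_iff.1 h).2⟩
    · exact ⟨e, mem_sdiff.2 ⟨by simp, fun h => hve (mem_incidenceFinset_iff.1 h).2⟩⟩
  calc #P ≤ #(P.biUnion (· \ G.incidenceFinset v)) :=
        card_le_card_biUnion (hP.2.mono fun s => sdiff_le) hcover
    _ ≤ #(G.edgeFinset \ G.incidenceFinset v) := by
        refine card_le_card (biUnion_subset.2 fun s hs => sdiff_subset_sdiff ?_ le_rfl)
        simpa [← coe_subset] using (hP.1 s hs).subset_edgeSet
    _ = #G.edgeFinset - G.degree v := by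
        rw [card_sdiff_of_subset (G.incidenceFinset_subset v), card_incidenceFinset_eq_degree]

theorem IsPairPacking.card_le_card_edgeFinset_sub_maxDegree (hP : G.IsPairPacking P) :
    #P ≤ #G.edgeFinset - G.maxDegree := by
  cases isEmpty_or_nonempty V
  · simpa using hP.two_mul_card_le.trans' (Nat.le_mul_of_pos_left _ two_pos)
  · obtain ⟨v, hv⟩ := G.exists_maximal_degree_vertex
    exact hv ▸ hP.card_le_card_edgeFinset_sub_degree v

theorem isPairPacking_image_pair {R L : Finset (Sym2 V)} (hR : R ⊆ G.edgeFinset)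
    (hL : L ⊆ G.edgeFinset) (hRL : Disjoint R L) {f : R → Sym2 V} (hf : Function.Injective f)
    (hfL : ∀ x, f x ∈ L) (hind : ∀ x : R, (x : Sym2 V).Independent (f x)) :
    G.IsPairPacking (univ.image fun x : R => {↑x, f x}) ∧
      #(univ.image fun x : R => ({↑x, f x} : Finset (Sym2 V))) = #R := by
  have hRf : ∀ x y : R, (x : Sym2 V) ≠ f y := fun x y h =>
    Finset.disjoint_left.1 hRL x.2 (h ▸ hfL y)
  have hdisj : ∀ x y : R, x ≠ y → Disjoint ({↑x, f x} : Finset (Sym2 V)) {↑y, f y} := by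
    intro x y hxy
    simp [hRf, Ne.symm hxy, (hRf x y).symm, (hf.ne hxy).symm]
  refine ⟨⟨?_, ?_⟩, ?_⟩
  · simp only [mem_image, mem_univ, true_and, forall_exists_index]
    rintro s x rfl
    exact ⟨x, f x, mem_edgeFinset.1 (hR x.2), mem_edgeFinset.1 (hL (hfL x)), (hind x).ne,
      hind x, rfl⟩
  · simp only [coe_image, coe_univ, Set.image_univ]
    rintro s ⟨x, rfl⟩ t ⟨y, rfl⟩ hst
    exact hdisj x y fun h => hst (h ▸ rfl)
  · rw [card_image_of_injective _ fun x y hxy => ?_, card_univ, Fintype.card_coe]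
    by_contra hne
    have := hdisj x y hne
    rw [hxy, disjoint_self_iff_empty] at this
    exact insert_ne_empty _ _ this

theorem exists_isPairPacking_of_forall_card_le {R L : Finset (Sym2 V)}
    (hR : R ⊆ G.edgeFinset) (hL : L ⊆ G.edgeFinset) (hRL : Disjoint R L)
    (hall : ∀ S ⊆ R, #S ≤ #{g ∈ L | ∃ e ∈ S, e.Independent g}) :
    ∃ P, G.IsPairPacking P ∧ #P = #R := by
  obtain ⟨f, hf, hfL⟩ := (all_card_le_biUnion_card_iff_exists_injective
    fun x : R => {g ∈ L | (x : Sym2 V).Independent g}).1 fun A => by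
      convert hall (A.map (Function.Embedding.subtype _)) (by
        simp only [subset_iff, mem_map, Function.Embedding.coe_subtype]
        rintro _ ⟨x, -, rfl⟩
        exact x.2) using 2
      · simp
      · ext g
        simp only [mem_biUnion, mem_filter, mem_map, Function.Embedding.coe_subtype]
        aesop
  simp only [mem_filter] at hfL
  exact ⟨_, isPairPacking_image_pair hR hL hRL hf (fun x => (hfL x).1) fun x => (hfL x).2⟩

theorem exists_independent_of_two_mul_maxDegree_lt (h : 2 * G.maxDegree < #G.edgeFinset)
    (e : Sym2 V) : ∃ f ∈ G.edgeSet, e.Independent f := by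
  induction e using Sym2.ind with | _ x y =>
  have hlt : #(G.incidenceFinset x ∪ G.incidenceFinset y) < #G.edgeFinset := by
    refine (card_union_le _ _).trans_lt ?_
    simp only [card_incidenceFinset_eq_degree]
    linarith [G.degree_le_maxDegree x, G.degree_le_maxDegree y]
  obtain ⟨f, hf, hfxy⟩ := exists_mem_notMem_of_card_lt_card hlt
  rw [mem_edgeFinset] at hf
  refine ⟨f, hf, fun v ⟨hv, hvf⟩ => hfxy ?_⟩
  rcases Sym2.mem_iff.1 hv with rfl | rfl
  exacts [mem_union_left _ (mem_incidenceFinset_iff.2 ⟨hf, hvf⟩),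
    mem_union_right _ (mem_incidenceFinset_iff.2 ⟨hf, hvf⟩)]

theorem IsExceptional.card_edgeFinset_le (h : G.IsExceptional) : #G.edgeFinset ≤ 4 := by
  rcases h with ⟨a, b, c, -, -, -, hE⟩ | ⟨a, b, c, d, e, -, -, -, -, -, -, hE⟩
  · have : G.edgeFinset = {s(a, b), s(a, c), s(b, c)} := by simp [← coe_inj, hE]
    exact this ▸ card_le_three.trans (by norm_num)
  · have : G.edgeFinset = {s(a, b), s(a, c), s(b, c), s(d, e)} := by simp [← coe_inj, hE]
    exact this ▸ card_le_four

theorem triangle_subset_edgeFinset (hab : G.Adj a b) (hac : G.Adj a c) (hbc : G.Adj b c) :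
    {s(a, b), s(a, c), s(b, c)} ⊆ G.edgeFinset := by
  simp [insert_subset_iff, hab, hac, hbc]

theorem three_le_card_edgeFinset (hab : G.Adj a b) (hac : G.Adj a c) (hbc : G.Adj b c) :
    3 ≤ #G.edgeFinset :=
  card_triangle hab.ne hac.ne hbc.ne ▸ card_le_card (triangle_subset_edgeFinset hab hac hbc)

theorem eq_or_eq_of_maxDegree_le_two (hΔ : G.maxDegree ≤ 2) (hab : G.Adj a b)
    (hac : G.Adj a c) (hbc : b ≠ c) {g : Sym2 V} (hg : g ∈ G.edgeSet) (hag : a ∈ g) :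
    g = s(a, b) ∨ g = s(a, c) := by
  obtain ⟨w, rfl⟩ := Sym2.mem_iff_exists.1 hag
  by_contra! hw
  have hsub : ({b, c, w} : Finset V) ⊆ G.neighborFinset a := by
    simp [insert_subset_iff, hab, hac, G.mem_edgeSet.1 hg]
  have := card_le_card hsub
  rw [card_insert_of_notMem (by aesop), card_pair (by aesop),
    card_neighborFinset_eq_degree] at this
  linarith [G.degree_le_maxDegree a]

theorem notMem_of_notMem_triangle (hΔ : G.maxDegree ≤ 2) (hab : G.Adj a b)
    (hac : G.Adj a c) (hbc : G.Adj b c) {g : Sym2 V} (hg : g ∈ G.edgeSet)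
    (hgT : g ∉ ({s(a, b), s(a, c), s(b, c)} : Finset (Sym2 V))) :
    a ∉ g ∧ b ∉ g ∧ c ∉ g := by
  refine ⟨fun h => hgT ?_, fun h => hgT ?_, fun h => hgT ?_⟩
  · rcases eq_or_eq_of_maxDegree_le_two hΔ hab hac hbc.ne hg h with rfl | rfl <;> simp
  · rcases eq_or_eq_of_maxDegree_le_two hΔ hab.symm hbc hac.ne hg h with rfl | rfl <;>
      simp [Sym2.eq_swap]
  · rcases eq_or_eq_of_maxDegree_le_two hΔ hac.symm hbc.symm hab.ne hg h with rfl | rfl <;>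
      simp [Sym2.eq_swap]

theorem exists_isPairPacking_of_triangle (hΔ : G.maxDegree ≤ 2) (hab : G.Adj a b)
    (hac : G.Adj a c) (hbc : G.Adj b c) (hm : #G.edgeFinset ≤ 6) :
    ∃ P, G.IsPairPacking P ∧ #P = #G.edgeFinset - 3 := by
  set T : Finset (Sym2 V) := {s(a, b), s(a, c), s(b, c)}
  have hT := triangle_subset_edgeFinset hab hac hbc
  have hT3 : #T = 3 := card_triangle hab.ne hac.ne hbc.ne
  suffices hall : ∀ S ⊆ G.edgeFinset \ T, #S ≤ #{g ∈ T | ∃ e ∈ S, e.Independent g} by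
    obtain ⟨P, hP, hcard⟩ := exists_isPairPacking_of_forall_card_le sdiff_subset hT
      sdiff_disjoint hall
    exact ⟨P, hP, by rw [hcard, card_sdiff_of_subset hT, hT3]⟩
  intro S hS
  obtain rfl | ⟨e, he⟩ := S.eq_empty_or_nonempty
  · simp
  obtain ⟨heE, heT⟩ := mem_sdiff.1 (hS he)
  obtain ⟨hae, hbe, hce⟩ := notMem_of_notMem_triangle hΔ hab hac hbc (mem_edgeFinset.1 heE) heT
  have hN : {g ∈ T | ∃ e ∈ S, e.Independent g} = T := by
    refine filter_true_of_mem fun g hg => ⟨e, he, ?_⟩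
    simp only [T, mem_insert, mem_singleton] at hg
    rcases hg with rfl | rfl | rfl <;> exact Sym2.independent_mk_right ‹_› ‹_›
  rw [hN, hT3]
  have := card_le_card hS
  rw [card_sdiff_of_subset hT, hT3] at this
  omega

theorem isExceptional_of_triangle (hΔ : G.maxDegree ≤ 2) (hab : G.Adj a b) (hac : G.Adj a c)
    (hbc : G.Adj b c) (hm : #G.edgeFinset ≤ 4) : G.IsExceptional := by
  set T : Finset (Sym2 V) := {s(a, b), s(a, c), s(b, c)}
  have hT := triangle_subset_edgeFinset hab hac hbc
  have hE : G.edgeSet = ↑(T ∪ (G.edgeFinset \ T)) := by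
    rw [union_sdiff_of_subset hT, coe_edgeFinset]
  have hR : #(G.edgeFinset \ T) ≤ 1 := by
    rw [card_sdiff_of_subset hT, card_triangle hab.ne hac.ne hbc.ne]
    omega
  rcases Nat.le_one_iff_eq_zero_or_eq_one.1 hR with h0 | h1
  · refine Or.inl ⟨a, b, c, hab.ne, hac.ne, hbc.ne, ?_⟩
    rw [hE, card_eq_zero.1 h0]
    simp [T]
  · obtain ⟨g, hg⟩ := card_eq_one.1 h1
    obtain ⟨hgE, hgT⟩ := mem_sdiff.1 (hg ▸ mem_singleton_self g)
    obtain ⟨ha, hb, hc⟩ := notMem_of_notMem_triangle hΔ hab hac hbc (mem_edgeFinset.1 hgE) hgT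
    induction g using Sym2.ind with | _ d e =>
    refine Or.inr ⟨a, b, c, d, e, hab.ne, hac.ne, hbc.ne, (mem_edgeFinset.1 hgE).ne, ?_, ?_, ?_⟩
    · simp only [Sym2.mem_iff, not_or] at ha hb hc
      simp [Ne.symm ha.1, Ne.symm hb.1, Ne.symm hc.1]
    · simp only [Sym2.mem_iff, not_or] at ha hb hc
      simp [Ne.symm ha.2, Ne.symm hb.2, Ne.symm hc.2]
    · rw [hE, hg]
      simp [T]

theorem exists_triangle_of_card_filter_lt {v : V} (hv : G.degree v = G.maxDegree)
    {S : Finset (Sym2 V)} (hS : S ⊆ G.edgeFinset \ G.incidenceFinset v) (hSv : #S ≤ G.degree v)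
    (hlt : #{g ∈ G.incidenceFinset v | ∃ e ∈ S, e.Independent g} < #S) :
    G.maxDegree ≤ 2 ∧ ∃ a b, G.Adj v a ∧ G.Adj v b ∧ G.Adj a b := by
  set L := G.incidenceFinset v
  set N := {g ∈ L | ∃ e ∈ S, e.Independent g}
  have hS' : ∀ e ∈ S, e ∈ G.edgeSet ∧ v ∉ e := fun e he => by
    obtain ⟨heE, heL⟩ := mem_sdiff.1 (hS he)
    rw [mem_edgeFinset] at heE
    exact ⟨heE, fun hve => heL (mem_incidenceFinset_iff.2 ⟨heE, hve⟩)⟩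
  have blocked : ∀ g ∈ L \ N, ∃ z, G.Adj v z ∧ g = s(v, z) ∧ ∀ e ∈ S, z ∈ e := by
    intro g hg
    obtain ⟨hgL, hgN⟩ := mem_sdiff.1 hg
    obtain ⟨hgE, hvg⟩ := mem_incidenceFinset_iff.1 hgL
    obtain ⟨z, rfl⟩ := Sym2.mem_iff_exists.1 hvg
    refine ⟨z, hgE, rfl, fun e he => ?_⟩
    by_contra hze
    exact hgN (mem_filter.2 ⟨hgL, e, he, Sym2.independent_mk_right (hS' e he).2 hze⟩)
  have hB : #(L \ N) = G.degree v - #N := by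
    rw [card_sdiff_of_subset (filter_subset _ _), card_incidenceFinset_eq_degree]
  obtain ⟨g₁, hg₁⟩ : (L \ N).Nonempty := card_pos.1 (by omega)
  obtain ⟨z₁, hvz₁, rfl, hz₁⟩ := blocked _ hg₁
  -- the edges of `S` and the edge `v z₁` all contain `z₁`
  have hdeg : #S + 1 ≤ G.degree z₁ := by
    rw [← card_incidenceFinset_eq_degree, ← card_insert_of_notMem fun h =>
      (mem_sdiff.1 (hS h)).2 (mem_sdiff.1 hg₁).1]
    refine card_le_card (insert_subset_iff.2 ⟨mem_incidenceFinset_iff.2 ⟨hvz₁, by simp⟩,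
      fun e he => mem_incidenceFinset_iff.2 ⟨(hS' e he).1, hz₁ e he⟩⟩)
  have := G.degree_le_maxDegree z₁
  obtain ⟨g₂, hg₂⟩ : ((L \ N).erase s(v, z₁)).Nonempty :=
    card_pos.1 (by rw [card_erase_of_mem hg₁]; omega)
  obtain ⟨z₂, hvz₂, rfl, hz₂⟩ := blocked _ (mem_of_mem_erase hg₂)
  have hz : z₁ ≠ z₂ := by rintro rfl; simp at hg₂
  have hS₁ : S ⊆ {s(z₁, z₂)} := fun e he =>
    mem_singleton.2 ((Sym2.mem_and_mem_iff hz).1 ⟨hz₁ e he, hz₂ e he⟩)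
  obtain ⟨e₀, he₀⟩ : S.Nonempty := card_pos.1 (by omega)
  have he₀' := mem_singleton.1 (hS₁ he₀)
  refine ⟨?_, z₁, z₂, hvz₁, hvz₂, G.mem_edgeSet.1 (he₀' ▸ (hS' e₀ he₀).1)⟩
  have hN : #N = 0 := by have := card_le_card hS₁; simp only [card_singleton] at this; omega
  have hB₂ : L \ N ⊆ {s(v, z₁), s(v, z₂)} := fun g hg => by
    obtain ⟨z, -, rfl, hz⟩ := blocked g hg
    rcases Sym2.mem_iff.1 (he₀' ▸ hz e₀ he₀) with rfl | rfl <;> simp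
  have := (card_le_card hB₂).trans card_le_two
  omega

theorem exists_isPairPacking_or_isExceptional_of_le_two_mul_maxDegree
    (h : #G.edgeFinset ≤ 2 * G.maxDegree) :
    (∃ P, G.IsPairPacking P ∧ #G.edgeFinset - G.maxDegree ≤ #P) ∨ G.IsExceptional := by
  by_cases hm : #G.edgeFinset ≤ G.maxDegree
  · exact Or.inl ⟨∅, isPairPacking_empty, by simp [hm]⟩
  have : Nonempty V := by
    obtain ⟨e, -⟩ := card_pos.1 (by omega : 0 < #G.edgeFinset)
    induction e using Sym2.ind with | _ x _ => exact ⟨x⟩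
  obtain ⟨v, hv⟩ := G.exists_maximal_degree_vertex
  set L := G.incidenceFinset v
  have hR : #(G.edgeFinset \ L) = #G.edgeFinset - G.maxDegree := by
    rw [card_sdiff_of_subset (G.incidenceFinset_subset v), card_incidenceFinset_eq_degree, hv]
  by_cases hall : ∀ S ⊆ G.edgeFinset \ L, #S ≤ #{g ∈ L | ∃ e ∈ S, e.Independent g}
  · obtain ⟨P, hP, hcard⟩ := exists_isPairPacking_of_forall_card_le sdiff_subset
      (G.incidenceFinset_subset v) sdiff_disjoint hall
    exact Or.inl ⟨P, hP, (hcard.trans hR).ge⟩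
  push Not at hall
  obtain ⟨S, hS, hlt⟩ := hall
  have := card_le_card hS
  obtain ⟨hΔ, a, b, hva, hvb, hab⟩ :=
    exists_triangle_of_card_filter_lt hv.symm hS (by omega) hlt
  exact Or.inr (isExceptional_of_triangle hΔ hva hvb hab (by omega))

theorem exists_isPairPacking_or_isExceptional :
    (∃ P, G.IsPairPacking P ∧ min (#G.edgeFinset / 2) (#G.edgeFinset - G.maxDegree) ≤ #P) ∨
      G.IsExceptional := by
  induction hm : #G.edgeFinset using Nat.strong_induction_on generalizing G with | _ m ih =>
  by_cases hΔ : m ≤ 2 * G.maxDegree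
  · refine (exists_isPairPacking_or_isExceptional_of_le_two_mul_maxDegree (hm ▸ hΔ)).imp ?_ id
    exact fun ⟨P, hP, hcard⟩ => ⟨P, hP, (min_le_right _ _).trans (hm ▸ hcard)⟩
  obtain ⟨e, he⟩ := card_pos.1 (by omega : 0 < #G.edgeFinset)
  obtain ⟨f, hf, hef⟩ := exists_independent_of_two_mul_maxDegree_lt (G := G) (by omega) e
  set G' := G.deleteEdges {e, f}
  have hm' : #G'.edgeFinset = m - 2 := by
    have : G'.edgeFinset = G.edgeFinset \ {e, f} := by ext; simp [G']
    rw [this, card_sdiff_of_subset (by simp [insert_subset_iff, he, hf]), card_pair hef.ne, hm]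
  have hΔ' : G'.maxDegree ≤ G.maxDegree := maxDegree_mono (deleteEdges_le _)
  rcases ih _ (by omega) hm' with ⟨P, hP, hcard⟩ | hexc
  · obtain ⟨hP', hcard'⟩ := hP.insert (mem_edgeFinset.1 he) hf hef
    exact Or.inl ⟨_, hP', by omega⟩
  -- `G'` is a triangle plus at most one edge, so `G` has at most six edges and `Δ(G) ≤ 2`
  obtain ⟨a, b, c, hab, hac, hbc⟩ := hexc.exists_triangle
  have := hexc.card_edgeFinset_le
  have := three_le_card_edgeFinset hab hac hbc
  obtain ⟨P, hP, hcard⟩ := exists_isPairPacking_of_triangle (G := G) (by omega)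
    (deleteEdges_le _ hab) (deleteEdges_le _ hac) (deleteEdges_le _ hbc) (by omega)
  exact Or.inl ⟨P, hP, by omega⟩

end SimpleGraph

/-- Let `G` be a graph that is not a triangle plus isolated vertices and not a triangle
plus an isolated edge plus isolated vertices. Then the maximum number of pairwise
edge-disjoint edge-pairs in `G` is `⌊|E(G)|/2⌋` if `|E(G)| ≥ 2Δ(G)`, and `|E(G)| − Δ(G)`
otherwise. -/
theorem statement_9 {V : Type*} [Fintype V] [DecidableEq V] (G : SimpleGraph V)
    [DecidableRel G.Adj]
    (h1 : ¬ ∃ a b c : V, a ≠ b ∧ a ≠ c ∧ b ≠ c ∧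
        G.edgeSet = {s(a, b), s(a, c), s(b, c)})
    (h2 : ¬ ∃ a b c d e : V, a ≠ b ∧ a ≠ c ∧ b ≠ c ∧ d ≠ e ∧
        d ∉ ({a, b, c} : Set V) ∧ e ∉ ({a, b, c} : Set V) ∧
        G.edgeSet = {s(a, b), s(a, c), s(b, c), s(d, e)}) :
    (∃ P : Finset (Finset (Sym2 V)),
        (∀ s ∈ P, IsEdgePair G s) ∧ (P : Set (Finset (Sym2 V))).PairwiseDisjoint id ∧
        P.card = (if 2 * G.maxDegree ≤ G.edgeFinset.card then G.edgeFinset.card / 2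
          else G.edgeFinset.card - G.maxDegree)) ∧
    (∀ P : Finset (Finset (Sym2 V)),
        (∀ s ∈ P, IsEdgePair G s) → (P : Set (Finset (Sym2 V))).PairwiseDisjoint id →
        P.card ≤ (if 2 * G.maxDegree ≤ G.edgeFinset.card then G.edgeFinset.card / 2
          else G.edgeFinset.card - G.maxDegree)) := by
  have hmin : (if 2 * G.maxDegree ≤ #G.edgeFinset then #G.edgeFinset / 2
      else #G.edgeFinset - G.maxDegree) =
      min (#G.edgeFinset / 2) (#G.edgeFinset - G.maxDegree) := by
    split_ifs <;> omega
  rw [hmin]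
  refine ⟨?_, fun P hP hdisj => le_min ?_ ?_⟩
  · obtain ⟨P, hP, hcard⟩ := G.exists_isPairPacking_or_isExceptional.resolve_right
      fun h => h.elim h1 h2
    obtain ⟨Q, hQP, hQ⟩ := exists_subset_card_eq hcard
    exact ⟨Q, (hP.subset hQP).1, (hP.subset hQP).2, hQ⟩
  · have := IsPairPacking.two_mul_card_le ⟨hP, hdisj⟩
    omega
  · exact IsPairPacking.card_le_card_edgeFinset_sub_maxDegree ⟨hP, hdisj⟩
end

section
/- Let ℓ ≥ 1 be an integer and let G be a graph of order n ≥ 4ℓ such that for every integer j with 2ℓ ≤ j ≤ n/2 + 2(ℓ−1), the number of vertices of G of degree at most j is less than j − 2ℓ + 1. Then for any multiset { {u₁,v₁}, {u₂,v₂}, …, {u_ℓ,v_ℓ} } of ℓ pairs of distinct vertices of G (the same pair may appear more than once), there exist ℓ pairwise edge-disjoint Hamiltonian paths P₁, P₂, …, P_ℓ in G such that P_i connects u_i and v_i for each 1 ≤ i ≤ ℓ. -/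
open SimpleGraph

namespace EDHP

open Finset List
open scoped Classical

variable {W : Type*}

noncomputable def deg [Fintype W] (K : SimpleGraph W) (v : W) : ℕ :=
  (Finset.univ.filter fun w => K.Adj v w).card

noncomputable def psi [Fintype W] (K : SimpleGraph W) (j : ℕ) : ℕ :=
  (Finset.univ.filter fun v => deg K v ≤ j).card

def HamCyc (K : SimpleGraph W) : Prop :=
  ∃ (a : W) (T : List W), (a :: T).Nodup ∧ (∀ v : W, v ∈ a :: T) ∧
    List.IsChain K.Adj (a :: (T ++ [a]))

def HamPathL (K : SimpleGraph W) (a b : W) (L : List W) : Prop :=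
  L.Nodup ∧ (∀ v : W, v ∈ L) ∧ List.IsChain K.Adj L ∧ L.head? = some a ∧ L.getLast? = some b

lemma deg_mono [Fintype W] {K₁ K₂ : SimpleGraph W} (h : K₁ ≤ K₂) (v : W) :
    deg K₁ v ≤ deg K₂ v := by
  apply Finset.card_le_card
  intro w hw
  simp only [Finset.mem_filter] at *
  exact ⟨hw.1, h hw.2⟩

lemma psi_anti [Fintype W] {K₁ K₂ : SimpleGraph W} (h : K₁ ≤ K₂) (j : ℕ) :
    psi K₂ j ≤ psi K₁ j := by
  apply Finset.card_le_card
  intro v hv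
  simp only [Finset.mem_filter] at *
  exact ⟨hv.1, le_trans (deg_mono h v) hv.2⟩

lemma psi_mono [Fintype W] (K : SimpleGraph W) {j j' : ℕ} (h : j ≤ j') :
    psi K j ≤ psi K j' := by
  apply Finset.card_le_card
  intro v hv
  simp only [Finset.mem_filter] at *
  exact ⟨hv.1, le_trans hv.2 h⟩

lemma chain'_adj_reverse {K : SimpleGraph W} {L : List W} (h : List.IsChain K.Adj L) :
    List.IsChain K.Adj L.reverse := by
  rw [List.isChain_reverse]
  exact List.IsChain.imp (fun a b hab => hab.symm) h

lemma HamPathL.rev {K : SimpleGraph W} {a b : W} {L : List W} (h : HamPathL K a b L) :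
    HamPathL K b a L.reverse := by
  obtain ⟨h1, h2, h3, h4, h5⟩ := h
  refine ⟨List.nodup_reverse.mpr h1, fun v => List.mem_reverse.mpr (h2 v),
    chain'_adj_reverse h3, ?_, ?_⟩
  · rw [List.head?_reverse]; exact h5
  · rw [List.getLast?_reverse]; exact h4

lemma length_eq_card [Fintype W] {L : List W} (hnd : L.Nodup) (hcov : ∀ v : W, v ∈ L) :
    L.length = Fintype.card W := by
  have h1 : L.toFinset = Finset.univ := by
    ext x; simp [hcov x]
  have h2 := List.toFinset_card_of_nodup hnd
  rw [h1] at h2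
  rw [← h2]
  exact Finset.card_univ

lemma hamCyc_top [Fintype W] (h3 : 3 ≤ Fintype.card W) : HamCyc (⊤ : SimpleGraph W) := by
  have hnd := Finset.nodup_toList (Finset.univ : Finset W)
  have hcov : ∀ v : W, v ∈ (Finset.univ : Finset W).toList := fun v =>
    Finset.mem_toList.mpr (Finset.mem_univ v)
  have hlen : (Finset.univ : Finset W).toList.length = Fintype.card W :=
    Finset.length_toList _
  have hnenil : (Finset.univ : Finset W).toList ≠ [] := by
    intro h; rw [h] at hlen; simp at hlen; omega
  obtain ⟨a, T, hL⟩ := List.exists_cons_of_ne_nil hnenil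
  rw [hL] at hnd hcov hlen
  have hTne : T ≠ [] := by
    intro h; rw [h] at hlen; simp at hlen; omega
  refine ⟨a, T, hnd, hcov, ?_⟩
  have : a :: (T ++ [a]) = (a :: T) ++ [a] := rfl
  rw [this, List.isChain_append]
  refine ⟨?_, List.isChain_singleton _, ?_⟩
  · exact List.Pairwise.isChain (hnd.imp (fun h => (SimpleGraph.top_adj _ _).mpr h))
  · intro x hx y hy
    simp only [List.head?_cons, Option.mem_def, Option.some.injEq] at hy
    rw [List.getLast?_eq_getLast (List.cons_ne_nil a T), Option.mem_def,
      Option.some.injEq] at hx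
    subst hy
    rw [List.getLast_cons hTne] at hx
    have hmem : x ∈ T := hx ▸ List.getLast_mem hTne
    have : a ∉ T := (List.nodup_cons.mp hnd).1
    exact (SimpleGraph.top_adj _ _).mpr (fun h => this (h ▸ hmem))

lemma hamCyc_rotate {K : SimpleGraph W} (h : HamCyc K) (a : W) :
    ∃ T, (a :: T).Nodup ∧ (∀ v : W, v ∈ a :: T) ∧ List.IsChain K.Adj (a :: (T ++ [a])) := by
  obtain ⟨b, T₀, hnd, hcov, hch⟩ := h
  obtain ⟨l₁, l₂, hsplit⟩ := List.append_of_mem (hcov a)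
  have hrot : (b :: T₀) ~r (a :: (l₂ ++ l₁)) := by
    rw [hsplit]
    have := List.isRotated_append (l := l₁) (l' := a :: l₂)
    simpa using this
  refine ⟨l₂ ++ l₁, hrot.nodup_iff.mp hnd, fun v => hrot.mem_iff.mp (hcov v), ?_⟩
  have hc1 : Cycle.Chain K.Adj ↑(b :: T₀) := by
    rw [Cycle.chain_coe_cons]
    exact hch
  have hco : (↑(b :: T₀) : Cycle W) = ↑(a :: (l₂ ++ l₁)) := Cycle.coe_eq_coe.mpr hrot
  rw [hco, Cycle.chain_coe_cons] at hc1
  exact hc1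

lemma sup_edge_adj {K : SimpleGraph W} {a b x y : W}
    (h : (K ⊔ SimpleGraph.fromEdgeSet {s(a, b)}).Adj x y) :
    K.Adj x y ∨ (x = a ∧ y = b) ∨ (x = b ∧ y = a) := by
  rcases (SimpleGraph.sup_adj _ _ _ _).mp h with h | h
  · exact Or.inl h
  · rw [SimpleGraph.fromEdgeSet_adj] at h
    obtain ⟨hmem, -⟩ := h
    rw [Set.mem_singleton_iff, Sym2.eq_iff] at hmem
    tauto

lemma chain'_restrict {K : SimpleGraph W} {a b : W} :
    ∀ {T : List W}, List.IsChain (K ⊔ SimpleGraph.fromEdgeSet {s(a, b)}).Adj T →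
      (∀ x ∈ T, x ≠ a) → List.IsChain K.Adj T := by
  intro T
  induction T with
  | nil => intro _ _; exact List.isChain_nil
  | cons x T ih =>
    intro hch hne
    cases T with
    | nil => exact List.isChain_singleton x
    | cons y T' =>
      rw [List.isChain_cons_cons] at hch ⊢
      refine ⟨?_, ih hch.2 (fun z hz => hne z (List.mem_cons_of_mem x hz))⟩
      rcases sup_edge_adj hch.1 with h | ⟨h, -⟩ | ⟨-, h⟩
      · exact h
      · exact absurd h (hne x (List.mem_cons_self))
      · exact absurd h (hne y (List.mem_cons_of_mem x (List.mem_cons_self)))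

lemma cycle_to_path [Fintype W] {K : SimpleGraph W} {a b : W} (hab : a ≠ b)
    (hnadj : ¬K.Adj a b) (h3 : 3 ≤ Fintype.card W)
    (hc : HamCyc (K ⊔ SimpleGraph.fromEdgeSet {s(a, b)})) :
    HamCyc K ∨ ∃ L, HamPathL K a b L := by
  obtain ⟨T, hnd, hcov, hch⟩ := hamCyc_rotate hc a
  have hlen : (a :: T).length = Fintype.card W := length_eq_card hnd hcov
  obtain ⟨c, T₂, rfl⟩ : ∃ c T₂, T = c :: T₂ := by
    cases T with
    | nil => simp at hlen; omega
    | cons c T₂ => exact ⟨_, _, rfl⟩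
  have hT₂ne : T₂ ≠ [] := by
    intro h; subst h; simp at hlen; omega
  -- decompose the chain
  have hch' : (K ⊔ SimpleGraph.fromEdgeSet {s(a, b)}).Adj a c ∧
      List.IsChain (K ⊔ SimpleGraph.fromEdgeSet {s(a, b)}).Adj ((c :: T₂) ++ [a]) := by
    have : a :: ((c :: T₂) ++ [a]) = a :: c :: (T₂ ++ [a]) := by simp
    rw [this, List.isChain_cons_cons] at hch
    exact ⟨hch.1, hch.2⟩
  obtain ⟨hac, hchrest⟩ := hch'
  set d := (c :: T₂).getLast (List.cons_ne_nil _ _) with hd_def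
  have hd_mem : d ∈ c :: T₂ := List.getLast_mem _
  have hrest := List.isChain_append.mp hchrest
  obtain ⟨hchT, -, hjoin⟩ := hrest
  have hda : (K ⊔ SimpleGraph.fromEdgeSet {s(a, b)}).Adj d a := by
    apply hjoin d _ a
    · simp
    · rw [List.getLast?_eq_getLast (List.cons_ne_nil _ _)]; rfl
  have ha_not : a ∉ c :: T₂ := (List.nodup_cons.mp hnd).1
  have hallne : ∀ x ∈ c :: T₂, x ≠ a := fun x hx he => ha_not (he ▸ hx)
  have hchK : List.IsChain K.Adj (c :: T₂) := chain'_restrict hchT hallne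
  have hcd : c ≠ d := by
    intro h
    have : d ∈ T₂ := by
      rw [hd_def, List.getLast_cons hT₂ne]
      exact List.getLast_mem hT₂ne
    have hcT₂ : c ∉ T₂ := (List.nodup_cons.mp (List.nodup_cons.mp hnd).2).1
    exact hcT₂ (h ▸ this)
  -- analyze hac
  have hacK : K.Adj a c ∨ c = b := by
    rcases sup_edge_adj hac with h | ⟨-, h⟩ | ⟨h, -⟩
    · exact Or.inl h
    · exact Or.inr h
    · exact absurd h hab
  have hdaK : K.Adj d a ∨ d = b := by
    rcases sup_edge_adj hda with h | ⟨-, h⟩ | ⟨h, -⟩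
    · exact Or.inl h
    · exact absurd h hab
    · exact Or.inr h
  by_cases hcb : c = b
  · -- path from b to a : (c :: T₂) ++ [a]
    subst hcb
    right
    have hKda : K.Adj d a := by
      rcases hdaK with h | h
      · exact h
      · exact absurd h.symm hcd
    refine ⟨((c :: T₂) ++ [a]).reverse, HamPathL.rev ?_⟩
    refine ⟨?_, ?_, ?_, ?_, ?_⟩
    · have hperm : ((c :: T₂) ++ [a]) ~ a :: c :: T₂ := List.perm_append_singleton _ _
      exact hperm.nodup_iff.mpr hnd
    · intro v
      have hperm : ((c :: T₂) ++ [a]) ~ a :: c :: T₂ := List.perm_append_singleton _ _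
      rw [hperm.mem_iff]
      exact hcov v
    · rw [List.isChain_append]
      refine ⟨hchK, List.isChain_singleton _, ?_⟩
      intro x hx y hy
      simp only [List.head?_cons, Option.mem_def, Option.some.injEq] at hy
      rw [List.getLast?_eq_getLast (List.cons_ne_nil _ _), Option.mem_def,
        Option.some.injEq] at hx
      subst hy
      rw [← hx]
      exact hKda
    · rw [List.head?_append_of_ne_nil _ (List.cons_ne_nil _ _)]; rfl
    · rw [List.getLast?_append_of_ne_nil _ (List.cons_ne_nil a [])]; rfl
  · have hKac : K.Adj a c := by
      rcases hacK with h | h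
      · exact h
      · exact absurd h hcb
    by_cases hdb : d = b
    · -- path a :: c :: T₂ from a to b
      right
      refine ⟨a :: c :: T₂, hnd, hcov, ?_, rfl, ?_⟩
      · rw [List.isChain_cons_cons]
        exact ⟨hKac, hchK⟩
      · have h1 : (a :: c :: T₂).getLast? = (c :: T₂).getLast? := by
          rw [show a :: c :: T₂ = [a] ++ (c :: T₂) from rfl]
          exact List.getLast?_append_of_ne_nil _ (List.cons_ne_nil _ _)
        rw [h1, List.getLast?_eq_getLast (List.cons_ne_nil _ _), ← hd_def, hdb]
    · -- cycle in K
      left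
      have hKda : K.Adj d a := by
        rcases hdaK with h | h
        · exact h
        · exact absurd h hdb
      refine ⟨a, c :: T₂, hnd, hcov, ?_⟩
      have : a :: ((c :: T₂) ++ [a]) = a :: c :: (T₂ ++ [a]) := by simp
      rw [this, List.isChain_cons_cons]
      refine ⟨hKac, ?_⟩
      rw [show c :: (T₂ ++ [a]) = (c :: T₂) ++ [a] from rfl, List.isChain_append]
      refine ⟨hchK, List.isChain_singleton _, ?_⟩
      intro x hx y hy
      simp only [List.head?_cons, Option.mem_def, Option.some.injEq] at hy
      rw [List.getLast?_eq_getLast (List.cons_ne_nil _ _), Option.mem_def,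
        Option.some.injEq] at hx
      subst hy
      rw [← hx]
      exact hKda

lemma crossing {K : SimpleGraph W} {L : List W} {a b z w : W} {i : ℕ}
    (hnd : L.Nodup) (hcov : ∀ v : W, v ∈ L) (hch : List.IsChain K.Adj L)
    (hhead : L.head? = some a) (hlast : L.getLast? = some b)
    (hw : L[i]? = some w) (hz : L[i + 1]? = some z)
    (haz : K.Adj a z) (hbw : K.Adj b w) : HamCyc K := by
  obtain ⟨hi1, hzget⟩ := List.getElem?_eq_some_iff.mp hz
  obtain ⟨hi0, hwget⟩ := List.getElem?_eq_some_iff.mp hw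
  obtain ⟨A, B, hAB, hAlast, hBhead, hAne, hBne⟩ :
      ∃ A B, A ++ B = L ∧ A.getLast? = some w ∧ B.head? = some z ∧ A ≠ [] ∧ B ≠ [] := by
    refine ⟨L.take (i + 1), L.drop (i + 1), List.take_append_drop _ _, ?_, ?_, ?_, ?_⟩
    · have hAlen : (L.take (i + 1)).length = i + 1 := by
        rw [List.length_take]; omega
      rw [List.getLast?_eq_getElem?, hAlen]
      simpa [List.getElem?_take_of_lt (Nat.lt_succ_self i)] using hw
    · rw [List.head?_eq_getElem?, List.getElem?_drop]
      simpa using hz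
    · intro h
      have := congrArg List.length h
      rw [List.length_take] at this
      simp only [List.length_nil] at this
      omega
    · intro h
      have := congrArg List.length h
      rw [List.length_drop] at this
      simp only [List.length_nil] at this
      omega
  have hBrevne : B.reverse ≠ [] := fun h => hBne (by simpa using congrArg List.reverse h)
  have hBlast : B.getLast? = some b := by
    rw [← hAB, List.getLast?_append_of_ne_nil _ hBne] at hlast
    exact hlast
  have hAhead : A.head? = some a := by
    rw [← hAB, List.head?_append_of_ne_nil _ hAne] at hhead
    exact hhead
  have hperm : A ++ B.reverse ~ L := by
    rw [← hAB]
    exact List.Perm.append (List.Perm.refl A) B.reverse_perm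
  obtain ⟨a', A', rfl⟩ := List.exists_cons_of_ne_nil hAne
  have haa' : a' = a := by simpa using hAhead
  have haz' : K.Adj a' z := by rw [haa']; exact haz
  refine ⟨a', A' ++ B.reverse, ?_, ?_, ?_⟩
  · exact hperm.nodup_iff.mpr hnd
  · intro v
    rw [show a' :: (A' ++ B.reverse) = (a' :: A') ++ B.reverse from rfl, hperm.mem_iff]
    exact hcov v
  · have heq : a' :: ((A' ++ B.reverse) ++ [a']) = (a' :: A') ++ (B.reverse ++ [a']) := by
      simp
    rw [heq, List.isChain_append]
    refine ⟨hch.prefix ⟨B, hAB⟩, ?_, ?_⟩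
    · rw [List.isChain_append]
      refine ⟨chain'_adj_reverse (hch.suffix ⟨a' :: A', hAB⟩), List.isChain_singleton _, ?_⟩
      intro x hx y hy
      simp only [List.head?_cons, Option.mem_def, Option.some.injEq] at hy
      rw [List.getLast?_reverse, hBhead, Option.mem_def, Option.some.injEq] at hx
      subst hy; rw [← hx]
      exact haz'.symm
    · intro x hx y hy
      rw [Option.mem_def, hAlast, Option.some.injEq] at hx
      rw [List.head?_append_of_ne_nil _ hBrevne, List.head?_reverse, hBlast,
        Option.mem_def, Option.some.injEq] at hy
      rw [← hx, ← hy]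
      exact hbw.symm

lemma counting [Fintype W] {K : SimpleGraph W} {a b : W} {L : List W}
    (h3 : 3 ≤ Fintype.card W)
    (hyp : ∀ j, 1 ≤ j → 2 * j < Fintype.card W → psi K j < j)
    (hpath : HamPathL K a b L) (hne : a ≠ b) (hnadj : ¬K.Adj a b)
    (hdeg : deg K a ≤ deg K b)
    (hmax : ∀ x y, x ≠ y → ¬K.Adj x y → deg K x + deg K y ≤ deg K a + deg K b)
    (hnoc : ¬HamCyc K) : False := by
  obtain ⟨hnd, hcov, hch, hhead, hlast⟩ := hpath
  have hlenL : L.length = Fintype.card W := length_eq_card hnd hcov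
  set Sf : Finset W := Finset.univ.filter
    (fun s => ∃ i : ℕ, L[i]? = some s ∧ ∃ z, L[i + 1]? = some z ∧ K.Adj a z) with hSf
  set Na : Finset W := Finset.univ.filter (fun w => K.Adj a w) with hNa
  set Nb : Finset W := Finset.univ.filter (fun w => K.Adj b w) with hNb
  have hdega : deg K a = Na.card := rfl
  have hdegb : deg K b = Nb.card := rfl
  -- step 1 : Na.card ≤ Sf.card
  have step1 : Na.card ≤ Sf.card := by
    apply Finset.card_le_card_of_injOn (fun w => (L[(L.idxOf w) - 1]?).getD a)
    · intro w hwN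
      have hadj : K.Adj a w := by
        rw [Finset.mem_coe, hNa, Finset.mem_filter] at hwN; exact hwN.2
      have hwL : w ∈ L := hcov w
      have hk : L.idxOf w < L.length := List.idxOf_lt_length_iff.mpr hwL
      have hLk : L[L.idxOf w] = w := List.getElem_idxOf hk
      have hk0 : L.idxOf w ≠ 0 := by
        intro h0
        have hL0 : L[0]? = some a := by rw [← List.head?_eq_getElem?]; exact hhead
        obtain ⟨hlt, hget⟩ := List.getElem?_eq_some_iff.mp hL0
        simp only [h0] at hLk
        exact hadj.ne (hget.symm.trans hLk)
      have hk1 : L.idxOf w - 1 < L.length := by omega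
      rw [Finset.mem_coe, hSf, Finset.mem_filter]
      refine ⟨Finset.mem_univ _, L.idxOf w - 1, ?_, w, ?_, hadj⟩
      · have h6 : L[L.idxOf w - 1]? = some (L[L.idxOf w - 1]) :=
          List.getElem?_eq_getElem hk1
        show _ = some (L[L.idxOf w - 1]?.getD a)
        rw [h6]
        rfl
      · rw [show L.idxOf w - 1 + 1 = L.idxOf w by omega,
          List.getElem?_eq_getElem hk, hLk]
    · intro w1 hw1 w2 hw2 heq
      rw [Finset.mem_coe, hNa, Finset.mem_filter] at hw1 hw2
      dsimp only at heq
      have hw1L : w1 ∈ L := hcov w1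
      have hw2L : w2 ∈ L := hcov w2
      have hk1 : L.idxOf w1 < L.length := List.idxOf_lt_length_iff.mpr hw1L
      have hk2 : L.idxOf w2 < L.length := List.idxOf_lt_length_iff.mpr hw2L
      have hk10 : L.idxOf w1 ≠ 0 := by
        intro h0
        have hL0 : L[0]? = some a := by rw [← List.head?_eq_getElem?]; exact hhead
        obtain ⟨hlt, hget⟩ := List.getElem?_eq_some_iff.mp hL0
        have h5 := List.getElem_idxOf hk1
        simp only [h0] at h5
        exact (hw1.2).ne (hget.symm.trans h5)
      have hk20 : L.idxOf w2 ≠ 0 := by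
        intro h0
        have hL0 : L[0]? = some a := by rw [← List.head?_eq_getElem?]; exact hhead
        obtain ⟨hlt, hget⟩ := List.getElem?_eq_some_iff.mp hL0
        have h5 := List.getElem_idxOf hk2
        simp only [h0] at h5
        exact (hw2.2).ne (hget.symm.trans h5)
      have hm1 : L.idxOf w1 - 1 < L.length := by omega
      have hm2 : L.idxOf w2 - 1 < L.length := by omega
      rw [List.getElem?_eq_getElem hm1, List.getElem?_eq_getElem hm2] at heq
      simp only [Option.getD_some] at heq
      have hidx : L.idxOf w1 - 1 = L.idxOf w2 - 1 := (hnd.getElem_inj_iff).mp heq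
      have hidx' : L.idxOf w1 = L.idxOf w2 := by omega
      calc w1 = L[L.idxOf w1] := (List.getElem_idxOf hk1).symm
        _ = L[L.idxOf w2] := by congr 1
        _ = w2 := List.getElem_idxOf hk2
  -- step 2
  have step2 : ∀ s ∈ Sf, ¬K.Adj b s ∧ s ≠ b := by
    intro s hs
    rw [hSf, Finset.mem_filter] at hs
    obtain ⟨-, i, hsi, z, hzi, haz⟩ := hs
    obtain ⟨hi1, hzget⟩ := List.getElem?_eq_some_iff.mp hzi
    obtain ⟨hi0, hsget⟩ := List.getElem?_eq_some_iff.mp hsi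
    constructor
    · intro hbs
      exact hnoc (crossing hnd hcov hch hhead hlast hsi hzi haz hbs)
    · intro hsb
      have hb' : L[L.length - 1]? = some b := by
        rw [← List.getLast?_eq_getElem?]; exact hlast
      obtain ⟨hlt, hget⟩ := List.getElem?_eq_some_iff.mp hb'
      have : L[i] = L[L.length - 1] := by rw [hsget, hget, hsb]
      have := (hnd.getElem_inj_iff).mp this
      omega
  -- b not in Sf
  have hbSf : b ∉ Sf := fun h => (step2 b h).2 rfl
  -- step 3
  have step3 : ∀ s ∈ Sf, deg K s ≤ deg K a := by
    intro s hs
    obtain ⟨hnadjbs, hsneb⟩ := step2 s hs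
    have := hmax s b hsneb (fun h => hnadjbs h.symm)
    omega
  set j := deg K a with hj
  have hj1 : 1 ≤ j := by
    by_contra h
    have hj0 : j = 0 := by omega
    have h1 : a ∈ Finset.univ.filter (fun v => deg K v ≤ 1) := by
      rw [Finset.mem_filter]
      exact ⟨Finset.mem_univ _, by omega⟩
    have : 1 ≤ psi K 1 := Finset.card_pos.mpr ⟨a, h1⟩
    have := hyp 1 le_rfl (by omega)
    omega
  -- step 4 : Sf ⊆ low degree set
  have step4 : j ≤ psi K j := by
    calc j = Na.card := hdega
      _ ≤ Sf.card := step1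
      _ ≤ psi K j := by
          apply Finset.card_le_card
          intro s hs
          rw [Finset.mem_filter]
          exact ⟨Finset.mem_univ _, step3 s hs⟩
  -- step 5
  have hdisj : Disjoint Nb (insert b Sf) := by
    rw [Finset.disjoint_left]
    intro x hx hx'
    rw [hNb, Finset.mem_filter] at hx
    rcases Finset.mem_insert.mp hx' with rfl | hxSf
    · exact hx.2.ne' rfl
    · exact (step2 x hxSf).1 hx.2
  have step5 : Nb.card + (Sf.card + 1) ≤ Fintype.card W := by
    have h1 : (Nb ∪ insert b Sf).card ≤ Fintype.card W := by
      rw [← Finset.card_univ]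
      exact Finset.card_le_card (Finset.subset_univ _)
    rw [Finset.card_union_of_disjoint hdisj, Finset.card_insert_of_notMem hbSf] at h1
    exact h1
  have step6 : 2 * j < Fintype.card W := by
    have h1 : j ≤ Nb.card := by rw [← hdegb]; exact hdeg
    have h2 : j ≤ Sf.card := le_trans (le_of_eq hdega) step1
    omega
  have := hyp j hj1 step6
  omega

lemma thmA [Fintype W] {H : SimpleGraph W} (h3 : 3 ≤ Fintype.card W)
    (hyp : ∀ j, 1 ≤ j → 2 * j < Fintype.card W → psi H j < j) : HamCyc H := by
  by_contra hnoc
  obtain ⟨K, ⟨hHK, hKnoc⟩, hKmax⟩ :=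
    Set.Finite.exists_maximalFor id {K : SimpleGraph W | H ≤ K ∧ ¬HamCyc K}
      (Set.toFinite _) ⟨H, le_refl H, hnoc⟩
  have hmaxprop : ∀ K' : SimpleGraph W, K < K' → HamCyc K' := by
    intro K' hlt
    by_contra h'
    exact (lt_irrefl K) (lt_of_lt_of_le hlt (hKmax ⟨le_trans hHK hlt.le, h'⟩ hlt.le))
  have hKhyp : ∀ j, 1 ≤ j → 2 * j < Fintype.card W → psi K j < j := by
    intro j h1 h2
    exact lt_of_le_of_lt (psi_anti hHK j) (hyp j h1 h2)
  -- K is not complete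
  have hKne : ∃ x y : W, x ≠ y ∧ ¬K.Adj x y := by
    by_contra h
    push_neg at h
    have : K = ⊤ := by
      ext x y
      constructor
      · intro hadj; exact hadj.ne
      · intro hxy; exact h x y hxy
    exact hKnoc (this ▸ hamCyc_top h3)
  obtain ⟨x₀, y₀, hxy₀, hnadj₀⟩ := hKne
  set P : Finset (W × W) :=
    (Finset.univ ×ˢ Finset.univ).filter (fun p : W × W => p.1 ≠ p.2 ∧ ¬K.Adj p.1 p.2) with hP
  have hPne : P.Nonempty := by
    refine ⟨(x₀, y₀), ?_⟩
    rw [hP, Finset.mem_filter]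
    exact ⟨Finset.mem_product.mpr ⟨Finset.mem_univ _, Finset.mem_univ _⟩, hxy₀, hnadj₀⟩
  obtain ⟨p, hpP, hpmax⟩ := Finset.exists_max_image P (fun p => deg K p.1 + deg K p.2) hPne
  rw [hP, Finset.mem_filter] at hpP
  obtain ⟨-, hpne, hpnadj⟩ := hpP
  have hmaxpair : ∀ x y : W, x ≠ y → ¬K.Adj x y →
      deg K x + deg K y ≤ deg K p.1 + deg K p.2 := by
    intro x y hxy hna
    have : (x, y) ∈ P := by
      rw [hP, Finset.mem_filter]
      exact ⟨Finset.mem_product.mpr ⟨Finset.mem_univ _, Finset.mem_univ _⟩, hxy, hna⟩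
    exact hpmax (x, y) this
  -- obtain ham path between chosen orientation
  have key : ∀ a b : W, a ≠ b → ¬K.Adj a b → deg K a ≤ deg K b →
      deg K a + deg K b = deg K p.1 + deg K p.2 → False := by
    intro a b hab hnadj hdegab hsum
    have hlt : K < K ⊔ SimpleGraph.fromEdgeSet {s(a, b)} := by
      refine lt_of_le_of_ne le_sup_left ?_
      intro heq
      apply hnadj
      rw [heq]
      apply (SimpleGraph.sup_adj _ _ _ _).mpr
      right
      rw [SimpleGraph.fromEdgeSet_adj]
      exact ⟨Set.mem_singleton _, hab⟩
    have hc' := hmaxprop _ hlt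
    rcases cycle_to_path hab hnadj h3 hc' with hcK | ⟨L, hL⟩
    · exact hKnoc hcK
    · refine counting h3 hKhyp hL hab hnadj hdegab ?_ hKnoc
      intro x y hxy hna
      rw [hsum]
      exact hmaxpair x y hxy hna
  rcases le_total (deg K p.1) (deg K p.2) with h | h
  · exact key p.1 p.2 hpne hpnadj h rfl
  · exact key p.2 p.1 hpne.symm (fun hadj => hpnadj hadj.symm) h (by omega)

/-- The auxiliary graph on `Option V` obtained from `H` by adding a new vertex
adjacent exactly to `u` and `v`. -/
def aug (H : SimpleGraph W) (u v : W) : SimpleGraph (Option W) where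
  Adj x y := match x, y with
    | some a, some b => H.Adj a b
    | some a, none => a = u ∨ a = v
    | none, some b => b = u ∨ b = v
    | none, none => False
  symm := by
    constructor
    rintro (_ | a) (_ | b) h
    · exact h
    · exact h
    · exact h
    · exact h.symm
  loopless := by
    constructor
    rintro (_ | a) h
    · exact h
    · exact H.loopless.irrefl a h

lemma aug_adj_some_some {H : SimpleGraph W} {u v a b : W} :
    (aug H u v).Adj (some a) (some b) ↔ H.Adj a b := Iff.rfl

lemma aug_adj_none_some {H : SimpleGraph W} {u v b : W} :
    (aug H u v).Adj none (some b) ↔ b = u ∨ b = v := Iff.rfl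

lemma deg_aug_some [Fintype W] (H : SimpleGraph W) (u v x : W) :
    deg H x ≤ deg (aug H u v) (some x) := by
  unfold deg
  have himg : (Finset.univ.filter fun w => H.Adj x w).image some ⊆
      Finset.univ.filter fun y => (aug H u v).Adj (some x) y := by
    intro y hy
    rw [Finset.mem_image] at hy
    obtain ⟨w, hw, rfl⟩ := hy
    rw [Finset.mem_filter] at hw ⊢
    exact ⟨Finset.mem_univ _, hw.2⟩
  calc (Finset.univ.filter fun w => H.Adj x w).card
      = ((Finset.univ.filter fun w => H.Adj x w).image some).card :=
        (Finset.card_image_of_injective _ (Option.some_injective W)).symm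
    _ ≤ _ := Finset.card_le_card himg

lemma deg_aug_none [Fintype W] (H : SimpleGraph W) {u v : W} (huv : u ≠ v) :
    2 ≤ deg (aug H u v) none := by
  unfold deg
  have hsub : ({some u, some v} : Finset (Option W)) ⊆
      Finset.univ.filter fun y => (aug H u v).Adj none y := by
    intro y hy
    rw [Finset.mem_insert, Finset.mem_singleton] at hy
    rw [Finset.mem_filter]
    rcases hy with rfl | rfl
    · exact ⟨Finset.mem_univ _, Or.inl rfl⟩
    · exact ⟨Finset.mem_univ _, Or.inr rfl⟩
  calc 2 = ({some u, some v} : Finset (Option W)).card := by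
        rw [Finset.card_pair (fun h => huv (Option.some_injective W h))]
    _ ≤ _ := Finset.card_le_card hsub

lemma psi_aug_le [Fintype W] (H : SimpleGraph W) (u v : W) (j : ℕ) :
    psi (aug H u v) j ≤ psi H j + 1 := by
  unfold psi
  have hsub : (Finset.univ.filter fun y => deg (aug H u v) y ≤ j) ⊆
      insert none ((Finset.univ.filter fun x => deg H x ≤ j).image some) := by
    intro y hy
    rw [Finset.mem_filter] at hy
    match y with
    | none => exact Finset.mem_insert_self _ _
    | some x =>
      apply Finset.mem_insert_of_mem
      rw [Finset.mem_image]
      refine ⟨x, ?_, rfl⟩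
      rw [Finset.mem_filter]
      exact ⟨Finset.mem_univ _, le_trans (deg_aug_some H u v x) hy.2⟩
  calc (Finset.univ.filter fun y => deg (aug H u v) y ≤ j).card
      ≤ (insert none ((Finset.univ.filter fun x => deg H x ≤ j).image some)).card :=
        Finset.card_le_card hsub
    _ ≤ ((Finset.univ.filter fun x => deg H x ≤ j).image some).card + 1 :=
        Finset.card_insert_le _ _
    _ ≤ psi H j + 1 := by
        have := Finset.card_image_le
          (s := Finset.univ.filter fun x => deg H x ≤ j) (f := some)
        unfold psi
        omega

lemma map_some_of_no_none : ∀ (T : List (Option W)), (∀ x ∈ T, x ≠ none) →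
    ∃ T' : List W, T = T'.map some := by
  intro T
  induction T with
  | nil => exact fun _ => ⟨[], rfl⟩
  | cons x t ih =>
    intro h
    obtain ⟨a, ha⟩ := Option.ne_none_iff_exists.mp (h x (List.mem_cons_self))
    obtain ⟨t', ht'⟩ := ih (fun z hz => h z (List.mem_cons_of_mem _ hz))
    exact ⟨a :: t', by rw [← ha, ht']; rfl⟩

lemma thmB [Fintype W] {H : SimpleGraph W} (h4 : 4 ≤ Fintype.card W)
    (hyp : ∀ j, 2 ≤ j → 2 * j ≤ Fintype.card W → psi H j + 2 ≤ j)
    {u v : W} (hne : u ≠ v) : ∃ L, HamPathL H u v L := by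
  have hpsi2 : psi H 2 = 0 := by
    have := hyp 2 le_rfl h4
    omega
  have hdeg3 : ∀ x : W, 3 ≤ deg H x := by
    intro x
    by_contra h
    have hx : x ∈ Finset.univ.filter (fun y => deg H y ≤ 2) := by
      rw [Finset.mem_filter]
      exact ⟨Finset.mem_univ _, by omega⟩
    have : 0 < psi H 2 := Finset.card_pos.mpr ⟨x, hx⟩
    omega
  have hcard : Fintype.card (Option W) = Fintype.card W + 1 := Fintype.card_option
  have hA : HamCyc (aug H u v) := by
    apply thmA (by omega)
    intro j h1 h2
    rcases Nat.lt_or_ge j 2 with hj2 | hj2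
    · -- j = 1
      have hj1 : j = 1 := by omega
      subst hj1
      have : psi (aug H u v) 1 = 0 := by
        rw [psi, Finset.card_eq_zero, Finset.filter_eq_empty_iff]
        rintro (_ | x) -
        · have := deg_aug_none H hne
          omega
        · have h5 := deg_aug_some H u v x
          have := hdeg3 x
          omega
      omega
    · have h2' : 2 * j ≤ Fintype.card W := by omega
      have := hyp j hj2 h2'
      have := psi_aug_le H u v j
      omega
  obtain ⟨T, hnd, hcov, hch⟩ := hamCyc_rotate hA none
  have hlen : (none :: T).length = Fintype.card (Option W) := length_eq_card hnd hcov
  obtain ⟨c, T₂, rfl⟩ : ∃ c T₂, T = c :: T₂ := by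
    cases T with
    | nil => simp at hlen; omega
    | cons c T₂ => exact ⟨_, _, rfl⟩
  have hT₂ne : T₂ ≠ [] := by
    intro h; subst h; simp at hlen; omega
  have hch' : (aug H u v).Adj none c ∧
      List.IsChain (aug H u v).Adj ((c :: T₂) ++ [none]) := by
    have heq : (none : Option W) :: ((c :: T₂) ++ [none]) = none :: c :: (T₂ ++ [none]) := by
      simp
    rw [heq, List.isChain_cons_cons] at hch
    exact ⟨hch.1, hch.2⟩
  obtain ⟨hnc, hchrest⟩ := hch'
  obtain ⟨hchT, -, hjoin⟩ := List.isChain_append.mp hchrest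
  set d := (c :: T₂).getLast (List.cons_ne_nil _ _) with hd_def
  have hd_mem : d ∈ c :: T₂ := List.getLast_mem _
  have hdn : (aug H u v).Adj d none := by
    apply hjoin d ?_ none ?_
    · rw [List.getLast?_eq_getLast (List.cons_ne_nil _ _)]; rfl
    · rfl
  have hnone_not : (none : Option W) ∉ c :: T₂ := (List.nodup_cons.mp hnd).1
  have hallne : ∀ x ∈ c :: T₂, x ≠ none := fun x hx he => hnone_not (he ▸ hx)
  obtain ⟨T', hT'⟩ := map_some_of_no_none (c :: T₂) hallne
  -- head and last of T'
  obtain ⟨x₀, hx₀⟩ : ∃ x₀, c = some x₀ :=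
    Option.ne_none_iff_exists'.mp (hallne c (List.mem_cons_self))
  obtain ⟨y₀, hy₀⟩ : ∃ y₀, d = some y₀ :=
    Option.ne_none_iff_exists'.mp (hallne d hd_mem)
  have hx₀uv : x₀ = u ∨ x₀ = v := by
    rw [hx₀] at hnc
    exact hnc
  have hy₀uv : y₀ = u ∨ y₀ = v := by
    rw [hy₀] at hdn
    exact hdn
  have hcd : c ≠ d := by
    intro h
    have : d ∈ T₂ := by
      rw [hd_def, List.getLast_cons hT₂ne]
      exact List.getLast_mem hT₂ne
    have hcT₂ : c ∉ T₂ := (List.nodup_cons.mp (List.nodup_cons.mp hnd).2).1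
    exact hcT₂ (h ▸ this)
  have hxy₀ : x₀ ≠ y₀ := by
    intro h
    exact hcd (by rw [hx₀, hy₀, h])
  -- properties of T'
  have hndT' : T'.Nodup := by
    have : (T'.map some).Nodup := hT' ▸ (List.nodup_cons.mp hnd).2
    exact this.of_map _
  have hcovT' : ∀ x : W, x ∈ T' := by
    intro x
    have hx : some x ∈ none :: c :: T₂ := hcov (some x)
    rcases List.mem_cons.mp hx with h | h
    · exact absurd h (by simp)
    · rw [hT'] at h
      obtain ⟨y, hy, hyx⟩ := List.mem_map.mp h
      rwa [← Option.some_injective W hyx]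
  have hchT' : List.IsChain H.Adj T' := by
    have : List.IsChain (aug H u v).Adj (T'.map some) := hT' ▸ hchT
    rw [List.isChain_map] at this
    exact this
  have hheadT' : T'.head? = some x₀ := by
    have h1 : (T'.map some).head? = (c :: T₂).head? := by rw [hT']
    rw [List.head?_map] at h1
    simp only [List.head?_cons] at h1
    rw [hx₀] at h1
    match T', h1 with
    | t :: ts, h1 =>
      simp only [List.head?_cons, Option.map_some] at h1 ⊢
      rw [Option.some_injective W (Option.some_injective _ h1)]
  have hlastT' : T'.getLast? = some y₀ := by
    have h1 : (T'.map some).getLast? = (c :: T₂).getLast? := by rw [hT']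
    rw [List.getLast?_map, List.getLast?_eq_getLast (List.cons_ne_nil _ _), ← hd_def,
      hy₀] at h1
    match hT'' : T'.getLast? with
    | some t =>
      rw [hT''] at h1
      simp only [Option.map_some] at h1
      rw [Option.some_injective W (Option.some_injective _ h1)]
    | none =>
      rw [hT''] at h1
      simp at h1
  -- conclude
  rcases hx₀uv with rfl | rfl
  · rcases hy₀uv with h | rfl
    · exact absurd h.symm hxy₀
    · exact ⟨T', hndT', hcovT', hchT', hheadT', hlastT'⟩
  · rcases hy₀uv with rfl | h
    · exact ⟨T'.reverse, HamPathL.rev ⟨hndT', hcovT', hchT', hheadT', hlastT'⟩⟩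
    · exact absurd h.symm hxy₀

lemma walk_of_list {H : SimpleGraph W} :
    ∀ (L : List W) {a b : W}, List.IsChain H.Adj L → L.head? = some a →
      L.getLast? = some b → ∃ p : H.Walk a b, p.support = L := by
  intro L
  induction L with
  | nil => intro a b _ h _; simp at h
  | cons x T ih =>
    intro a b hch hh hl
    have hax : a = x := by simpa using hh.symm
    subst hax
    cases T with
    | nil =>
      have hab : a = b := by simpa using hl
      subst hab
      exact ⟨SimpleGraph.Walk.nil, by simp⟩
    | cons y T' =>
      rw [List.isChain_cons_cons] at hch
      have hl' : (y :: T').getLast? = some b := by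
        rw [show a :: y :: T' = [a] ++ (y :: T') from rfl,
          List.getLast?_append_of_ne_nil _ (List.cons_ne_nil _ _)] at hl
        exact hl
      obtain ⟨p, hp⟩ := ih hch.2 rfl hl'
      exact ⟨SimpleGraph.Walk.cons hch.1 p, by simp [hp]⟩

def zipEdges (L : List W) : List (Sym2 W) :=
  (L.zip L.tail).map (fun q => s(q.1, q.2))

lemma walk_edges_zip {H : SimpleGraph W} {x y : W} (p : H.Walk x y) :
    p.edges = zipEdges p.support := by
  induction p with
  | nil => simp [zipEdges]
  | @cons u v w h p ih =>
    rw [SimpleGraph.Walk.edges_cons, SimpleGraph.Walk.support_cons, ih, zipEdges, zipEdges]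
    rw [p.support_eq_cons]
    simp only [List.zip_cons_cons, List.tail_cons, List.map_cons]

def nbrs [DecidableEq W] (v : W) : List W → List W
  | [] => []
  | [_] => []
  | x :: y :: t => (if v = x then [y] else if v = y then [x] else []) ++ nbrs v (y :: t)

lemma nbrs_of_not_mem [DecidableEq W] {v : W} : ∀ {L : List W}, v ∉ L → nbrs v L = [] := by
  intro L
  induction L with
  | nil => intro _; rfl
  | cons x t ih =>
    intro h
    cases t with
    | nil => rfl
    | cons y t' =>
      have hvx : v ≠ x := fun he => h (he ▸ List.mem_cons_self)
      have hvy : v ≠ y := fun he => h (by rw [he]; exact List.mem_cons_of_mem _ (List.mem_cons_self))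
      have ht : v ∉ y :: t' := fun hm => h (List.mem_cons_of_mem _ hm)
      simp only [nbrs, if_neg hvx, if_neg hvy, List.nil_append]
      exact ih ht

lemma nbrs_head_len [DecidableEq W] {v : W} : ∀ {t : List W}, v ∉ t → (nbrs v (v :: t)).length ≤ 1 := by
  intro t
  cases t with
  | nil => intro _; simp [nbrs]
  | cons y t' =>
    intro h
    have hvy : v ≠ y := fun he => h (he ▸ List.mem_cons_self)
    simp only [nbrs, if_pos rfl]
    rw [nbrs_of_not_mem h]
    simp

lemma nbrs_len [DecidableEq W] {v : W} : ∀ {L : List W}, L.Nodup → (nbrs v L).length ≤ 2 := by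
  intro L
  induction L with
  | nil => intro _; simp [nbrs]
  | cons x t ih =>
    intro hnd
    cases t with
    | nil => simp [nbrs]
    | cons y t' =>
      by_cases hvx : v = x
      · subst hvx
        simp only [nbrs, if_pos rfl]
        rw [nbrs_of_not_mem (List.nodup_cons.mp hnd).1]
        simp
      · by_cases hvy : v = y
        · subst hvy
          have hvt' : v ∉ t' := (List.nodup_cons.mp (List.nodup_cons.mp hnd).2).1
          have h9 := nbrs_head_len (v := v) hvt'
          simp only [nbrs, if_neg hvx, eq_self_iff_true, ite_true, List.length_append,
            List.length_cons, List.length_nil]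
          omega
        · simp only [nbrs, if_neg hvx, if_neg hvy, List.nil_append]
          exact ih (List.nodup_cons.mp hnd).2

lemma mem_nbrs [DecidableEq W] {v w : W} : ∀ {L : List W}, s(v, w) ∈ zipEdges L → w ∈ nbrs v L := by
  intro L
  induction L with
  | nil => intro h; simp [zipEdges] at h
  | cons x t ih =>
    intro h
    cases t with
    | nil => simp [zipEdges] at h
    | cons y t' =>
      simp only [zipEdges, List.tail_cons, List.zip_cons_cons, List.map_cons] at h
      rcases List.mem_cons.mp h with heq | hmem
      · rw [Sym2.eq_iff] at heq
        simp only [nbrs]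
        rcases heq with ⟨rfl, rfl⟩ | ⟨hwx, hvy⟩
        · rw [if_pos rfl]
          exact List.mem_append_left _ (List.mem_cons_self)
        · subst hwx; subst hvy
          by_cases hvx : v = w
          · rw [if_pos hvx]
            rw [← hvx]
            exact List.mem_append_left _ (List.mem_cons_self)
          · rw [if_neg hvx, if_pos rfl]
            exact List.mem_append_left _ (List.mem_cons_self)
      · simp only [nbrs]
        exact List.mem_append_right _ (ih hmem)

lemma deg_delete_ge [Fintype W] [DecidableEq W] {H : SimpleGraph W} {x y : W} (p : H.Walk x y)
    (hnd : p.support.Nodup) (v : W) :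
    deg H v ≤ deg (H.deleteEdges {e | e ∈ p.edges}) v + 2 := by
  classical
  set D : Finset W := (nbrs v p.support).toFinset with hD
  have hDcard : D.card ≤ 2 := le_trans (List.toFinset_card_le _) (nbrs_len hnd)
  have hsub : (Finset.univ.filter fun w => H.Adj v w) ⊆
      (Finset.univ.filter fun w => (H.deleteEdges {e | e ∈ p.edges}).Adj v w) ∪ D := by
    intro w hw
    rw [Finset.mem_filter] at hw
    by_cases he : s(v, w) ∈ p.edges
    · apply Finset.mem_union_right
      rw [hD, List.mem_toFinset]
      apply mem_nbrs
      rw [← walk_edges_zip]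
      exact he
    · apply Finset.mem_union_left
      rw [Finset.mem_filter]
      refine ⟨Finset.mem_univ _, ?_⟩
      rw [SimpleGraph.deleteEdges_adj]
      exact ⟨hw.2, he⟩
  calc deg H v ≤ ((Finset.univ.filter fun w =>
        (H.deleteEdges {e | e ∈ p.edges}).Adj v w) ∪ D).card := Finset.card_le_card hsub
    _ ≤ (Finset.univ.filter fun w =>
        (H.deleteEdges {e | e ∈ p.edges}).Adj v w).card + D.card := Finset.card_union_le _ _
    _ ≤ deg (H.deleteEdges {e | e ∈ p.edges}) v + 2 := by
        unfold deg
        convert Nat.add_le_add_left hDcard _ using 4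

lemma psi_delete [Fintype W] [DecidableEq W] {H : SimpleGraph W} {x y : W} (p : H.Walk x y)
    (hnd : p.support.Nodup) (j : ℕ) :
    psi (H.deleteEdges {e | e ∈ p.edges}) j ≤ psi H (j + 2) := by
  apply Finset.card_le_card
  intro w hw
  rw [Finset.mem_filter] at hw ⊢
  refine ⟨Finset.mem_univ _, ?_⟩
  have := deg_delete_ge p hnd w
  omega

theorem aux (ℓ : ℕ) : ∀ {V : Type*} [Fintype V] [DecidableEq V] (G : SimpleGraph V),
    4 * ℓ ≤ Fintype.card V →
    (∀ j, 2 * ℓ ≤ j → 2 * j + 4 ≤ Fintype.card V + 4 * ℓ → psi G j + 2 * ℓ ≤ j) →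
    ∀ (u v : Fin ℓ → V), (∀ i, u i ≠ v i) →
    ∃ P : ∀ i, G.Walk (u i) (v i), (∀ i, (P i).IsHamiltonian) ∧
      (∀ i j, i ≠ j → List.Disjoint (P i).edges (P j).edges) := by
  induction ℓ with
  | zero =>
    intro V _ _ G _ _ u v _
    exact ⟨fun i => i.elim0, fun i => i.elim0, fun i => i.elim0⟩
  | succ ℓ ih =>
    intro V _ _ G hn hcond u v huv
    have h4 : 4 ≤ Fintype.card V := by omega
    have hypB : ∀ j, 2 ≤ j → 2 * j ≤ Fintype.card V → psi G j + 2 ≤ j := by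
      intro j hj2 hjc
      rcases Nat.lt_or_ge j (2 * (ℓ + 1)) with h | h
      · have h0 := hcond (2 * (ℓ + 1)) le_rfl (by omega)
        have h1 : psi G j ≤ psi G (2 * (ℓ + 1)) := psi_mono G (by omega)
        omega
      · have := hcond j h (by omega)
        omega
    obtain ⟨L, hLnd, hLcov, hLch, hLh, hLl⟩ := thmB h4 hypB (huv (Fin.last ℓ))
    obtain ⟨Q, hQsup⟩ := walk_of_list L hLch hLh hLl
    have hQnd : Q.support.Nodup := hQsup ▸ hLnd
    have hQham : Q.IsHamiltonian := by
      intro a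
      rw [hQsup]
      exact le_antisymm (List.nodup_iff_count_le_one.mp hLnd a)
        (List.count_pos_iff.mpr (hLcov a))
    have hyp' : ∀ j, 2 * ℓ ≤ j →
        2 * j + 4 ≤ Fintype.card V + 4 * ℓ →
        psi (G.deleteEdges {e | e ∈ Q.edges}) j + 2 * ℓ ≤ j := by
      intro j hj hjc
      have h1 := psi_delete Q hQnd j
      have h2 := hcond (j + 2) (by omega) (by omega)
      omega
    obtain ⟨P', hham', hdisj'⟩ := ih (G.deleteEdges {e | e ∈ Q.edges}) (by omega) hyp'
      (fun i => u i.castSucc) (fun i => v i.castSucc) (fun i => huv i.castSucc)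
    have htrans : ∀ i, ∀ e ∈ (P' i).edges, e ∈ G.edgeSet := fun i e he =>
      (SimpleGraph.edgeSet_mono (SimpleGraph.deleteEdges_le _)) ((P' i).edges_subset_edgeSet he)
    have hnotinQ : ∀ i, ∀ e ∈ (P' i).edges, e ∉ Q.edges := by
      intro i e he hq
      have h5 := (P' i).edges_subset_edgeSet he
      rw [SimpleGraph.edgeSet_deleteEdges] at h5
      exact h5.2 hq
    refine ⟨fun i => Fin.lastCases (motive := fun i => G.Walk (u i) (v i)) Q
      (fun i' => (P' i').transfer G (htrans i')) i, ?_, ?_⟩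
    · intro i
      refine Fin.lastCases ?_ ?_ i
      · dsimp only
        rw [Fin.lastCases_last]
        exact hQham
      · intro i'
        dsimp only
        rw [Fin.lastCases_castSucc]
        intro a
        rw [SimpleGraph.Walk.support_transfer]
        exact hham' i' a
    · have hQP : ∀ i', List.Disjoint ((P' i').transfer G (htrans i')).edges Q.edges := by
        intro i' e he hq
        rw [SimpleGraph.Walk.edges_transfer] at he
        exact hnotinQ i' e he hq
      intro i j hij
      rcases Fin.eq_castSucc_or_eq_last i with ⟨i', rfl⟩ | rfl <;>
        rcases Fin.eq_castSucc_or_eq_last j with ⟨j', rfl⟩ | rfl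
      · dsimp only
        rw [Fin.lastCases_castSucc, Fin.lastCases_castSucc,
          SimpleGraph.Walk.edges_transfer, SimpleGraph.Walk.edges_transfer]
        exact hdisj' i' j' (fun h => hij (congrArg Fin.castSucc h))
      · dsimp only
        rw [Fin.lastCases_castSucc, Fin.lastCases_last]
        exact hQP i'
      · dsimp only
        rw [Fin.lastCases_castSucc, Fin.lastCases_last]
        intro e he hq
        exact hQP j' hq he
      · exact absurd rfl hij

end EDHP

/-- Let `ℓ ≥ 1` and let `G` be a graph of order `n ≥ 4ℓ` such that for every integer `j`
with `2ℓ ≤ j ≤ n/2 + 2(ℓ−1)`, the number of vertices of degree at most `j` is less than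
`j − 2ℓ + 1`. Then for any multiset of `ℓ` pairs of distinct vertices there are `ℓ`
pairwise edge-disjoint Hamiltonian paths connecting the prescribed pairs. -/
theorem statement_10 {V : Type*} [Fintype V] [DecidableEq V] (ℓ : ℕ) (hℓ : 1 ≤ ℓ)
    (G : SimpleGraph V) [DecidableRel G.Adj]
    (hn : 4 * ℓ ≤ Fintype.card V)
    (hcond : ∀ j : ℕ, 2 * ℓ ≤ j → (j : ℝ) ≤ (Fintype.card V : ℝ) / 2 + 2 * ((ℓ : ℝ) - 1) →
      (((Finset.univ.filter fun v => G.degree v ≤ j).card : ℝ) < (j : ℝ) - 2 * ℓ + 1))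
    (u v : Fin ℓ → V) (huv : ∀ i, u i ≠ v i) :
    ∃ P : ∀ i, G.Walk (u i) (v i),
      (∀ i, (P i).IsHamiltonian) ∧
      (∀ i j, i ≠ j → List.Disjoint (P i).edges (P j).edges) := by
  apply EDHP.aux ℓ G hn ?_ u v huv
  intro j hj hrange
  have hreal : (j : ℝ) ≤ (Fintype.card V : ℝ) / 2 + 2 * ((ℓ : ℝ) - 1) := by
    have h1 : (2 * j + 4 : ℝ) ≤ (Fintype.card V : ℝ) + 4 * ℓ := by exact_mod_cast hrange
    linarith
  have hc := hcond j hj hreal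
  have hdeg : ∀ w, EDHP.deg G w = G.degree w := by
    intro w
    unfold EDHP.deg
    rw [Finset.filter_congr_decidable, ← SimpleGraph.neighborFinset_eq_filter]
    rfl
  have hpsi : EDHP.psi G j = (Finset.univ.filter fun v => G.degree v ≤ j).card := by
    unfold EDHP.psi
    rw [Finset.filter_congr_decidable]
    congr 1
    apply Finset.filter_congr
    intro w _
    rw [hdeg w]
  rw [← hpsi] at hc
  have hnat : EDHP.psi G j + 2 * ℓ < j + 1 := by
    have h2 : (EDHP.psi G j : ℝ) + 2 * ℓ < (j : ℝ) + 1 := by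
      push_cast
      push_cast at hc
      linarith
    exact_mod_cast h2
  omega
end

section
/- Let k ≥ 1 be an integer and let G₁ and G₂ be k-connected graphs with V(G₁) ∩ V(G₂) = ∅. Let G be a graph obtained from G₁ and G₂ by adding k pairwise vertex-disjoint paths P₁, P₂, …, P_k, each connecting a vertex of V(G₁) to a vertex of V(G₂), such that no internal vertex of any P_i lies in V(G₁) ∪ V(G₂). Let G′ be a graph obtained from G by adding edges so that for each 1 ≤ i ≤ k, every internal vertex of P_i has at least k neighbors in V(G₁) ∪ V(G₂). Then G′ is k-connected. -/
open SimpleGraph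

/-- A graph `G` on a finite vertex type is `k`-connected if its vertex connectivity is at
least `k`. -/
def IsKConnected {V : Type*} [Fintype V] (k : ℕ) (G : SimpleGraph V) : Prop :=
  k < Fintype.card V ∧
    ∀ S : Finset V, S.card < k → (G.induce ((S : Set V)ᶜ)).Connected

lemma reachable_induce_of_walk {V : Type*} {G : SimpleGraph V} {s : Set V}
    {u v : V} (w : G.Walk u v) (hw : ∀ x ∈ w.support, x ∈ s)
    (hu : u ∈ s) (hv : v ∈ s) :
    (G.induce s).Reachable ⟨u, hu⟩ ⟨v, hv⟩ := by
  induction w with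
  | nil => rfl
  | @cons x y z h p ih =>
    have hy : y ∈ s := hw y (by simp)
    have hadj : (G.induce s).Adj ⟨x, hu⟩ ⟨y, hy⟩ := h
    exact hadj.reachable.trans (ih (fun t ht => hw t (by simp [ht])) hy hv)

lemma reach_part {V : Type*} [Fintype V] [DecidableEq V] {k : ℕ}
    (A : Finset V) (G₁ : SimpleGraph ↥A)
    (hG₁ : IsKConnected k G₁)
    (G' : SimpleGraph V) (hle : ∀ x y : ↥A, G₁.Adj x y → G'.Adj x y)
    (S : Finset V) (hS : S.card < k)
    {x y : V} (hx : x ∈ A) (hy : y ∈ A)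
    (hxs : x ∈ ((S : Set V))ᶜ) (hys : y ∈ ((S : Set V))ᶜ) :
    (G'.induce ((S : Set V))ᶜ).Reachable ⟨x, hxs⟩ ⟨y, hys⟩ := by
  classical
  set SA : Finset ↥A := Finset.univ.filter (fun z : ↥A => (z : V) ∈ S) with hSA
  have hcard : SA.card ≤ S.card := by
    apply Finset.card_le_card_of_injOn (fun z : ↥A => (z : V))
    · intro z hz
      simp [hSA] at hz
      exact hz
    · exact Subtype.val_injective.injOn
  have hconn := (hG₁.2 SA (lt_of_le_of_lt hcard hS)).preconnected
  have hxmem : (⟨x, hx⟩ : ↥A) ∈ ((SA : Set ↥A))ᶜ := by simp [hSA]; exact hxs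
  have hymem : (⟨y, hy⟩ : ↥A) ∈ ((SA : Set ↥A))ᶜ := by simp [hSA]; exact hys
  have hreach := hconn ⟨⟨x, hx⟩, hxmem⟩ ⟨⟨y, hy⟩, hymem⟩
  let F : G₁.induce ((SA : Set ↥A))ᶜ →g G'.induce ((S : Set V))ᶜ :=
    ⟨fun z => ⟨(z : ↥A), by
      have := z.2
      simp [hSA] at this
      exact this⟩, fun hpq => hle _ _ hpq⟩
  exact hreach.map F

/-- Let `G₁`, `G₂` be `k`-connected graphs on disjoint vertex sets `A`, `B`, and let `G′`
be a graph containing `G₁`, `G₂` and `k` pairwise vertex-disjoint paths from `A` to `B`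
whose internal vertices avoid `A ∪ B`, such that every vertex lies in `A ∪ B` or is an
internal vertex of one of the paths, and such that every internal vertex of each path has
at least `k` neighbors in `A ∪ B`. Then `G′` is `k`-connected. -/
theorem statement_12 {V : Type*} [Fintype V] [DecidableEq V] (k : ℕ) (hk : 1 ≤ k)
    (A B : Finset V) (hAB : Disjoint A B)
    (G₁ : SimpleGraph ↥A) (G₂ : SimpleGraph ↥B)
    (hG₁ : IsKConnected k G₁) (hG₂ : IsKConnected k G₂)
    (G' : SimpleGraph V)
    (hG₁le : ∀ x y : ↥A, G₁.Adj x y → G'.Adj x y)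
    (hG₂le : ∀ x y : ↥B, G₂.Adj x y → G'.Adj x y)
    (a b : Fin k → V) (ha : ∀ i, a i ∈ A) (hb : ∀ i, b i ∈ B)
    (P : ∀ i : Fin k, G'.Walk (a i) (b i))
    (hpath : ∀ i, (P i).IsPath)
    (hvdisj : ∀ i j, i ≠ j → List.Disjoint (P i).support (P j).support)
    (hint : ∀ i, ∀ x ∈ (P i).support.tail.dropLast, x ∉ A ∪ B)
    (hcover : ∀ x : V, x ∈ A ∪ B ∨ ∃ i, x ∈ (P i).support.tail.dropLast)
    (hnbr : ∀ i, ∀ x ∈ (P i).support.tail.dropLast,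
      k ≤ (G'.neighborSet x ∩ ((A ∪ B : Finset V) : Set V)).ncard) :
    IsKConnected k G' := by
  classical
  constructor
  · have h1 := hG₁.1
    have h2 : Fintype.card ↥A ≤ Fintype.card V := by
      rw [Fintype.card_coe]
      exact Finset.card_le_univ A
    omega
  · intro S hS
    -- find a path avoiding S
    have hex : ∃ i, ∀ x ∈ (P i).support, x ∉ S := by
      by_contra h
      push_neg at h
      choose f hf1 hf2 using h
      have hinj : Function.Injective f := by
        intro i j hij
        by_contra hne
        exact hvdisj i j hne (hij ▸ hf1 i) (hf1 j)
      have hle := Finset.card_le_card_of_injOn (s := Finset.univ) (t := S) f (fun i _ => hf2 i) hinj.injOn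
      simp at hle
      omega
    obtain ⟨i0, hi0⟩ := hex
    have has : a i0 ∈ ((S : Set V))ᶜ := hi0 _ (P i0).start_mem_support
    have hbs : b i0 ∈ ((S : Set V))ᶜ := hi0 _ (P i0).end_mem_support
    have bridge := reachable_induce_of_walk (P i0) (fun x hx => hi0 x hx) has hbs
    have reachA : ∀ (x : V) (hx : x ∈ A) (hxs : x ∈ ((S : Set V))ᶜ),
        (G'.induce ((S : Set V))ᶜ).Reachable ⟨x, hxs⟩ ⟨a i0, has⟩ :=
      fun x hx hxs => reach_part A G₁ hG₁ G' hG₁le S hS hx (ha i0) hxs has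
    have reachB : ∀ (x : V) (hx : x ∈ B) (hxs : x ∈ ((S : Set V))ᶜ),
        (G'.induce ((S : Set V))ᶜ).Reachable ⟨x, hxs⟩ ⟨a i0, has⟩ :=
      fun x hx hxs =>
        (reach_part B G₂ hG₂ G' hG₂le S hS hx (hb i0) hxs hbs).trans bridge.symm
    have key : ∀ z : ↥((S : Set V))ᶜ,
        (G'.induce ((S : Set V))ᶜ).Reachable z ⟨a i0, has⟩ := by
      rintro ⟨x, hxs⟩
      rcases hcover x with hx | ⟨j, hj⟩
      · rcases Finset.mem_union.1 hx with h | h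
        · exact reachA x h hxs
        · exact reachB x h hxs
      · have hnb := hnbr j x hj
        have hexy : ∃ y, y ∈ G'.neighborSet x ∩ ((A ∪ B : Finset V) : Set V) ∧ y ∉ S := by
          by_contra h
          push_neg at h
          have hsub : G'.neighborSet x ∩ ((A ∪ B : Finset V) : Set V) ⊆ (S : Set V) :=
            fun y hy => h y hy
          have hle2 := Set.ncard_le_ncard hsub S.finite_toSet
          rw [Set.ncard_coe_finset] at hle2
          omega
        obtain ⟨y, ⟨hyadj, hyAB⟩, hyS⟩ := hexy
        have hys : y ∈ ((S : Set V))ᶜ := hyS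
        have hadj : (G'.induce ((S : Set V))ᶜ).Adj ⟨x, hxs⟩ ⟨y, hys⟩ := hyadj
        have hyAB' : y ∈ A ∪ B := by simpa using hyAB
        rcases Finset.mem_union.1 hyAB' with h | h
        · exact hadj.reachable.trans (reachA y h hys)
        · exact hadj.reachable.trans (reachB y h hys)
    have hne : Nonempty ↥((S : Set V))ᶜ := ⟨⟨a i0, has⟩⟩
    exact ⟨fun u v => (key u).trans (key v).symm⟩
end

section
/- Let p ≥ 1 and k′ ≥ 0 be integers, let G′ be a graph of order n with minimum degree δ(G′) ≥ n/2 − p, and let W ⊂ V(G′) be a set of k′ vertices such that G′ − W is disconnected. If n ≥ 4k′ + 6p − 5, then G′ − W has exactly two connected components G₁ and G₂ with |V(G₁)| ≤ |V(G₂)|, and moreover n/2 − k′ − p + 1 ≤ |V(G₁)| ≤ (n − k′)/2 and (n − k′)/2 ≤ |V(G₂)| ≤ n/2 + p − 1. -/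
open SimpleGraph

/-- The minimum degree of a graph on a finite vertex type. -/
noncomputable def minDeg {V : Type*} [Fintype V] (G : SimpleGraph V) : ℕ :=
  @SimpleGraph.minDegree V G _ (Classical.decRel _)

lemma minDeg_le_ncard (V : Type*) [Fintype V] (G : SimpleGraph V) (v : V) :
    minDeg G ≤ (G.neighborSet v).ncard := by
  classical
  have h : G.minDegree ≤ G.degree v := SimpleGraph.minDegree_le_degree G v
  have h2 : G.degree v = (G.neighborSet v).ncard := by
    rw [Set.ncard_eq_toFinset_card']
    congr 1
  rw [h2] at h
  unfold minDeg
  convert h using 2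

lemma comp_supp_lower {V : Type*} [Fintype V] (G' : SimpleGraph V) (W : Finset V)
    (c : (G'.induce ((W : Set V)ᶜ)).ConnectedComponent) :
    minDeg G' + 1 ≤ (Subtype.val '' c.supp).ncard + W.card := by
  obtain ⟨v, rfl⟩ := c.exists_rep
  set N : Set V := G'.neighborSet v.val with hN
  have hsub : insert v.val (N \ ↑W) ⊆
      Subtype.val '' ((G'.induce ((W : Set V)ᶜ)).connectedComponentMk v).supp := by
    intro u hu
    rcases Set.mem_insert_iff.mp hu with h | h
    · exact ⟨v, by simp [SimpleGraph.ConnectedComponent.mem_supp_iff], h.symm⟩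
    · have huW : u ∈ (↑W : Set V)ᶜ := h.2
      refine ⟨⟨u, huW⟩, ?_, rfl⟩
      rw [SimpleGraph.ConnectedComponent.mem_supp_iff, SimpleGraph.ConnectedComponent.eq]
      have hadj : (G'.induce ((W : Set V)ᶜ)).Adj ⟨u, huW⟩ v := by
        simp only [SimpleGraph.comap_adj, Function.Embedding.coe_subtype]
        exact (h.1 : G'.Adj v.val u).symm
      exact hadj.reachable
  have h1 := Set.ncard_le_ncard hsub (Set.toFinite _)
  have h2 : (insert v.val (N \ ↑W)).ncard = (N \ ↑W).ncard + 1 := by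
    rw [Set.ncard_insert_of_notMem]
    intro h
    exact G'.irrefl (h.1 : G'.Adj v.val v.val)
  have h3 : N.ncard ≤ (N \ ↑W).ncard + W.card := by
    have := Set.ncard_le_ncard_diff_add_ncard N (↑W : Set V)
    rwa [Set.ncard_coe_finset] at this
  have h4 := minDeg_le_ncard V G' v.val
  rw [← hN] at h4
  show minDeg G' + 1 ≤
    (Subtype.val '' ((G'.induce ((W : Set V)ᶜ)).connectedComponentMk v).supp).ncard + W.card
  omega

/-- Let `p ≥ 1`, `k′ ≥ 0`, let `G′` be a graph of order `n` with `δ(G′) ≥ n/2 − p`, and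
let `W` be a set of `k′` vertices such that `G′ − W` is disconnected. If
`n ≥ 4k′ + 6p − 5`, then `G′ − W` has exactly two connected components `G₁`, `G₂` with
`|V(G₁)| ≤ |V(G₂)|`, and
`n/2 − k′ − p + 1 ≤ |V(G₁)| ≤ (n − k′)/2 ≤ |V(G₂)| ≤ n/2 + p − 1`. -/
theorem statement_13 {V : Type*} [Fintype V] (p k' : ℕ) (hp : 1 ≤ p)
    (G' : SimpleGraph V) (W : Finset V) (hW : W.card = k')
    (hδ : (Fintype.card V : ℝ) / 2 - p ≤ minDeg G')
    (hdisc : ¬ (G'.induce ((W : Set V)ᶜ)).Connected)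
    (hn : 4 * k' + 6 * p - 5 ≤ Fintype.card V) :
    ∃ c₁ c₂ : (G'.induce ((W : Set V)ᶜ)).ConnectedComponent, c₁ ≠ c₂ ∧
      (∀ c : (G'.induce ((W : Set V)ᶜ)).ConnectedComponent, c = c₁ ∨ c = c₂) ∧
      c₁.supp.ncard ≤ c₂.supp.ncard ∧
      (Fintype.card V : ℝ) / 2 - k' - p + 1 ≤ c₁.supp.ncard ∧
      (c₁.supp.ncard : ℝ) ≤ ((Fintype.card V : ℝ) - k') / 2 ∧
      ((Fintype.card V : ℝ) - k') / 2 ≤ c₂.supp.ncard ∧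
      (c₂.supp.ncard : ℝ) ≤ (Fintype.card V : ℝ) / 2 + p - 1 := by
  classical
  set n := Fintype.card V with hndef
  have hkn : k' ≤ n := by
    rw [← hW]; simpa using Finset.card_le_univ W
  have hn' : 4 * k' + 6 * p ≤ n + 5 := by omega
  have hnR : 4 * (k' : ℝ) + 6 * p - 5 ≤ n := by
    have : ((4 * k' + 6 * p : ℕ) : ℝ) ≤ ((n + 5 : ℕ) : ℝ) := Nat.cast_le.mpr hn'
    push_cast at this; linarith
  have hcompl : ((↑W : Set V)ᶜ).ncard = n - k' := by
    have h := Set.ncard_add_ncard_compl (↑W : Set V)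
    rw [Set.ncard_coe_finset, hW, Nat.card_eq_fintype_card] at h
    omega
  have hcomplR : (((↑W : Set V)ᶜ).ncard : ℝ) = (n : ℝ) - k' := by
    rw [hcompl, Nat.cast_sub hkn]
  -- key lower bound for any component
  have key : ∀ c : (G'.induce ((W : Set V)ᶜ)).ConnectedComponent,
      (n : ℝ) / 2 - k' - p + 1 ≤ ((Subtype.val '' c.supp).ncard : ℝ) := by
    intro c
    have h := comp_supp_lower G' W c
    rw [hW] at h
    have h' : ((minDeg G' : ℝ) + 1) ≤ ((Subtype.val '' c.supp).ncard : ℝ) + k' := by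
      exact_mod_cast h
    linarith
  have himg : ∀ c : (G'.induce ((W : Set V)ᶜ)).ConnectedComponent,
      (Subtype.val '' c.supp).ncard = c.supp.ncard :=
    fun c => Set.ncard_image_of_injective _ Subtype.val_injective
  have hsubW : ∀ c : (G'.induce ((W : Set V)ᶜ)).ConnectedComponent,
      Subtype.val '' c.supp ⊆ (↑W : Set V)ᶜ := by
    rintro c x ⟨y, _, rfl⟩; exact y.2
  have hdisj : ∀ c d : (G'.induce ((W : Set V)ᶜ)).ConnectedComponent, c ≠ d →
      Disjoint (Subtype.val '' c.supp) (Subtype.val '' d.supp) := by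
    intro c d hcd
    rw [Set.disjoint_left]
    rintro x ⟨y, hy, rfl⟩ ⟨z, hz, hzx⟩
    have : z = y := Subtype.val_injective hzx
    subst this
    rw [SimpleGraph.ConnectedComponent.mem_supp_iff] at hy hz
    exact hcd (hy ▸ hz ▸ rfl)
  -- two distinct components exist
  have hne0 : Nonempty ↥((↑W : Set V)ᶜ) := by
    have hx : ((↑W : Set V)ᶜ).Nonempty := by
      rw [← Set.ncard_pos (Set.toFinite _), hcompl]; omega
    exact hx.to_subtype
  have hne : ¬ (G'.induce ((W : Set V)ᶜ)).Preconnected := fun h => hdisc ⟨h⟩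
  obtain ⟨u, w, huw⟩ : ∃ u w, ¬ (G'.induce ((W : Set V)ᶜ)).Reachable u w := by
    by_contra h; push_neg at h; exact hne h
  set A := (G'.induce ((W : Set V)ᶜ)).connectedComponentMk u with hA
  set B := (G'.induce ((W : Set V)ᶜ)).connectedComponentMk w with hB
  have hAB : A ≠ B := fun h => huw (SimpleGraph.ConnectedComponent.exact h)
  -- all components are A or B
  have hall : ∀ c : (G'.induce ((W : Set V)ᶜ)).ConnectedComponent, c = A ∨ c = B := by
    intro c
    by_contra hc
    push_neg at hc
    obtain ⟨hcA, hcB⟩ := hc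
    have hU : (Subtype.val '' c.supp ∪ Subtype.val '' A.supp ∪ Subtype.val '' B.supp).ncard
        = (Subtype.val '' c.supp).ncard + (Subtype.val '' A.supp).ncard
          + (Subtype.val '' B.supp).ncard := by
      rw [Set.ncard_union_eq (Disjoint.union_left (hdisj c B hcB) (hdisj A B hAB))
          (Set.toFinite _) (Set.toFinite _),
        Set.ncard_union_eq (hdisj c A hcA) (Set.toFinite _) (Set.toFinite _)]
    have hle : (Subtype.val '' c.supp ∪ Subtype.val '' A.supp ∪ Subtype.val '' B.supp).ncard
        ≤ ((↑W : Set V)ᶜ).ncard :=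
      Set.ncard_le_ncard (Set.union_subset (Set.union_subset (hsubW c) (hsubW A)) (hsubW B))
        (Set.toFinite _)
    rw [hU] at hle
    have hleR : ((Subtype.val '' c.supp).ncard : ℝ) + (Subtype.val '' A.supp).ncard
        + (Subtype.val '' B.supp).ncard ≤ (n : ℝ) - k' := by
      rw [← hcomplR]; exact_mod_cast hle
    have k1 := key c; have k2 := key A; have k3 := key B
    have hpR : (1 : ℝ) ≤ p := by exact_mod_cast hp
    linarith
  -- cover
  have hcover : Subtype.val '' A.supp ∪ Subtype.val '' B.supp = (↑W : Set V)ᶜ := by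
    apply Set.Subset.antisymm (Set.union_subset (hsubW A) (hsubW B))
    intro x hx
    rcases hall ((G'.induce ((W : Set V)ᶜ)).connectedComponentMk ⟨x, hx⟩) with h | h
    · exact Or.inl ⟨⟨x, hx⟩, by rw [SimpleGraph.ConnectedComponent.mem_supp_iff]; exact h, rfl⟩
    · exact Or.inr ⟨⟨x, hx⟩, by rw [SimpleGraph.ConnectedComponent.mem_supp_iff]; exact h, rfl⟩
  have hsum : (Subtype.val '' A.supp).ncard + (Subtype.val '' B.supp).ncard
      = ((↑W : Set V)ᶜ).ncard := by
    rw [← Set.ncard_union_eq (hdisj A B hAB) (Set.toFinite _) (Set.toFinite _), hcover]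
  have hsumR : ((A.supp.ncard : ℝ)) + (B.supp.ncard : ℝ) = (n : ℝ) - k' := by
    rw [← hcomplR, ← hsum, ← himg A, ← himg B]; push_cast; ring
  have kA : (n : ℝ) / 2 - k' - p + 1 ≤ (A.supp.ncard : ℝ) := by
    have := key A; rwa [himg A] at this
  have kB : (n : ℝ) / 2 - k' - p + 1 ≤ (B.supp.ncard : ℝ) := by
    have := key B; rwa [himg B] at this
  rcases le_total A.supp.ncard B.supp.ncard with hab | hab
  · refine ⟨A, B, hAB, hall, hab, kA, ?_, ?_, ?_⟩
    · have : (A.supp.ncard : ℝ) ≤ (B.supp.ncard : ℝ) := Nat.cast_le.mpr hab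
      linarith
    · have : (A.supp.ncard : ℝ) ≤ (B.supp.ncard : ℝ) := Nat.cast_le.mpr hab
      linarith
    · linarith
  · refine ⟨B, A, hAB.symm, fun c => (hall c).symm, hab, kB, ?_, ?_, ?_⟩
    · have : (B.supp.ncard : ℝ) ≤ (A.supp.ncard : ℝ) := Nat.cast_le.mpr hab
      linarith
    · have : (B.supp.ncard : ℝ) ≤ (A.supp.ncard : ℝ) := Nat.cast_le.mpr hab
      linarith
    · linarith
end

section
/- For all integers k ≥ 1 and n ≥ k + 1 with n + k odd, there exists a graph of order n with minimum degree exactly (n + k − 3)/2 that is not k-connected. (Such a graph is obtained from two vertex-disjoint copies of the complete graph K_{(n+k−1)/2} by identifying k − 1 vertices of one copy with k − 1 vertices of the other; this shows that the bound δ(G) ≥ (n + k − 2)/2 guaranteeing k-connectivity is best possible.) -/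
open SimpleGraph

/-!
Take two cliques `A` and `B` covering the vertex set, of the same size `m`, and sharing
`|A ∩ B| = 2m - n` vertices. A vertex of `A \ B` sees exactly `A` and every vertex sees at least
`m - 1` others, so the minimum degree is `m - 1`; and deleting `A ∩ B` leaves no edge between
`A \ B` and `B \ A`. For `m = (n + k - 1)/2` the separator has `k - 1` vertices.
-/

open Finset

namespace SimpleGraph

variable {V : Type*}

theorem IsClique.card_sub_one_le_degree {G : SimpleGraph V} [Fintype V] [DecidableRel G.Adj]
    [DecidableEq V] {s : Finset V} (hs : G.IsClique (s : Set V)) {v : V} (hv : v ∈ s) :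
    #s - 1 ≤ G.degree v := by
  have hsub : s.erase v ⊆ G.neighborFinset v := fun w hw ↦ by
    rw [mem_erase] at hw
    exact (G.mem_neighborFinset v w).mpr (hs hv hw.2 hw.1.symm)
  rw [← card_neighborFinset_eq_degree, ← card_erase_of_mem hv]
  exact card_le_card hsub

theorem minDeg_eq_of_forall_le_degree [Fintype V] (G : SimpleGraph V) [DecidableRel G.Adj] {d : ℕ}
    (hle : ∀ v, d ≤ G.degree v) (v : V) (hv : G.degree v = d) : minDeg G = d := by
  have : Nonempty V := ⟨v⟩
  have hmin : minDeg G = G.minDegree := by unfold minDeg; congr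
  rw [hmin]
  exact le_antisymm (hv ▸ G.minDegree_le_degree v) (G.le_minDegree_of_forall_le_degree d hle)

def gluedCliques (A B : Finset V) : SimpleGraph V where
  Adj x y := x ≠ y ∧ (x ∈ A ∧ y ∈ A ∨ x ∈ B ∧ y ∈ B)
  symm := ⟨fun _ _ h ↦ ⟨h.1.symm, h.2.imp And.symm And.symm⟩⟩
  loopless := ⟨fun _ h ↦ h.1 rfl⟩

variable {A B : Finset V}

theorem gluedCliques_adj {x y : V} :
    (gluedCliques A B).Adj x y ↔ x ≠ y ∧ (x ∈ A ∧ y ∈ A ∨ x ∈ B ∧ y ∈ B) :=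
  Iff.rfl

theorem isClique_left_gluedCliques : (gluedCliques A B).IsClique (A : Set V) :=
  fun _ hx _ hy hxy ↦ ⟨hxy, Or.inl ⟨hx, hy⟩⟩

theorem isClique_right_gluedCliques : (gluedCliques A B).IsClique (B : Set V) :=
  fun _ hx _ hy hxy ↦ ⟨hxy, Or.inr ⟨hx, hy⟩⟩

variable [DecidableEq V]

instance : DecidableRel (gluedCliques A B).Adj :=
  fun _ _ ↦ inferInstanceAs (Decidable (_ ≠ _ ∧ _))

theorem not_connected_induce_compl_inter_gluedCliques {a b : V} (ha : a ∈ A \ B)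
    (hb : b ∈ B \ A) :
    ¬ ((gluedCliques A B).induce ((A ∩ B : Finset V) : Set V)ᶜ).Connected := by
  rw [mem_sdiff] at ha hb
  intro hconn
  obtain ⟨p⟩ := hconn.preconnected ⟨a, by simp [ha.2]⟩ ⟨b, by simp [hb.2]⟩
  obtain ⟨d, -, hdB, hdB'⟩ := p.exists_boundary_dart {x | x.1 ∉ B} ha.2 (by simpa using hb.1)
  have hsep : d.snd.1 ∉ A ∩ B := d.snd.2
  have hadj : (gluedCliques A B).Adj d.fst.1 d.snd.1 := d.adj
  simp only [Set.mem_ofPred_eq, not_not] at hdB hdB'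
  rw [gluedCliques_adj] at hadj
  rw [mem_inter] at hsep
  tauto

variable [Fintype V]

theorem degree_gluedCliques_of_mem_sdiff {v : V} (hv : v ∈ A \ B) :
    (gluedCliques A B).degree v = #A - 1 := by
  rw [mem_sdiff] at hv
  have hnbr : (gluedCliques A B).neighborFinset v = A.erase v := by
    ext w
    simp only [mem_neighborFinset, gluedCliques_adj, mem_erase]
    tauto
  rw [← card_neighborFinset_eq_degree, hnbr, card_erase_of_mem hv.1]

theorem minDeg_gluedCliques (hcover : A ∪ B = univ) (hcard : #A = #B) {v : V}
    (hv : v ∈ A \ B) : minDeg (gluedCliques A B) = #A - 1 := by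
  refine minDeg_eq_of_forall_le_degree _ (fun w ↦ ?_) v (degree_gluedCliques_of_mem_sdiff hv)
  rcases mem_union.mp (hcover ▸ mem_univ w) with hw | hw
  · exact isClique_left_gluedCliques.card_sub_one_le_degree hw
  · exact hcard ▸ isClique_right_gluedCliques.card_sub_one_le_degree hw

theorem not_isKConnected_gluedCliques {k : ℕ} (hk : #(A ∩ B) < k) {a b : V} (ha : a ∈ A \ B)
    (hb : b ∈ B \ A) : ¬ IsKConnected k (gluedCliques A B) :=
  fun h ↦ not_connected_induce_compl_inter_gluedCliques ha hb (h.2 _ hk)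

end SimpleGraph

/-- For all integers `k ≥ 1` and `n ≥ k + 1` with `n + k` odd, there is a graph of order
`n` with minimum degree exactly `(n + k − 3)/2` that is not `k`-connected. -/
theorem statement_14 (k n : ℕ) (hk : 1 ≤ k) (hn : k + 1 ≤ n) (hodd : Odd (n + k)) :
    ∃ G : SimpleGraph (Fin n), minDeg G = (n + k - 3) / 2 ∧ ¬ IsKConnected k G := by
  obtain ⟨t, ht⟩ := hodd
  set m := (n + k - 1) / 2
  let A : Finset (Fin n) := Iio ⟨m, by omega⟩
  let B : Finset (Fin n) := Ici ⟨n - m, by omega⟩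
  have hA : #A = m := Fin.card_Iio _
  have hB : #B = m := by simp only [B, Fin.card_Ici]; omega
  have hcover : A ∪ B = univ := eq_univ_of_forall fun x ↦ by
    simp only [A, B, mem_union, mem_Iio, mem_Ici, Fin.lt_def, Fin.le_def]
    omega
  have hinter : #(A ∩ B) < k := by
    have := card_union_add_card_inter A B
    rw [hcover, card_univ, Fintype.card_fin] at this
    omega
  have ha : (⟨0, by omega⟩ : Fin n) ∈ A \ B := by
    simp only [A, B, mem_sdiff, mem_Iio, mem_Ici, Fin.lt_def, Fin.le_def]; omega
  have hb : (⟨n - 1, by omega⟩ : Fin n) ∈ B \ A := by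
    simp only [A, B, mem_sdiff, mem_Iio, mem_Ici, Fin.lt_def, Fin.le_def]; omega
  refine ⟨gluedCliques A B, ?_, not_isKConnected_gluedCliques hinter ha hb⟩
  rw [minDeg_gluedCliques hcover (hA.trans hB.symm) ha, hA]
  omega
end
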